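/- arXiv:2307.00634 — 4 statements merged into one kernel-verified Lean document; each statement's English description precedes it below -/
import Mathlib

section
/- Let m > 3 be a real number, σ > 0, and set n = 2m. Let B(T) = -2π ∫₀^∞ [exp(-(1/T)((σ/r)^{2m} - (σ/r)^m)) - 1] r² dr. Then, as T → ∞, B(T) · T^{3/(2m)} tends to -(πσ³/m) Γ(-3/(2m)); in particular this limit is positive. -/
open Real Filter MeasureTheory Set Topology

lemma abs_exp_neg_sub_one_le {t : ℝ} (ht : 0 ≤ t) : |Real.exp (-t) - 1| ≤ t := by
  have h1 : Real.exp (-t) ≤ 1 := Real.exp_le_one_iff.mpr (by linarith)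
  rw [abs_of_nonpos (by linarith)]
  nlinarith [Real.add_one_le_exp (-t)]

lemma abs_exp_neg_sub_one_le_one {t : ℝ} (ht : 0 ≤ t) : |Real.exp (-t) - 1| ≤ 1 := by
  have h1 : Real.exp (-t) ≤ 1 := Real.exp_le_one_iff.mpr (by linarith)
  rw [abs_of_nonpos (by linarith)]
  nlinarith [Real.exp_pos (-t)]

lemma contOn_rpow_const (c : ℝ) : ContinuousOn (fun t : ℝ => t ^ c) (Ioi (0:ℝ)) :=
  continuousOn_of_forall_continuousAt fun t ht =>
    Real.continuousAt_rpow_const t c (Or.inl (ne_of_gt ht))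

lemma CS_measOn {a : ℝ} {s : Set ℝ} (hs : MeasurableSet s) (hss : s ⊆ Ioi 0) :
    AEStronglyMeasurable (fun t : ℝ => (Real.exp (-t) - 1) * t ^ (a - 1))
      (volume.restrict s) := by
  refine ContinuousOn.aestronglyMeasurable ?_ hs
  exact (((Real.continuous_exp.comp continuous_neg).sub continuous_const).continuousOn).mul
    ((contOn_rpow_const (a-1)).mono hss)

lemma CS_integrable {a : ℝ} (h0 : -1 < a) (h1 : a < 0) :
    IntegrableOn (fun t => (Real.exp (-t) - 1) * t ^ (a - 1)) (Ioi (0:ℝ)) := by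
  have hIoc : IntegrableOn (fun t => (Real.exp (-t) - 1) * t ^ (a - 1)) (Ioc (0:ℝ) 1) := by
    refine Integrable.mono' ((intervalIntegral.intervalIntegrable_rpow' h0 (a := 0) (b := 1)).1)
      (CS_measOn measurableSet_Ioc Ioc_subset_Ioi_self) ?_
    rw [ae_restrict_iff' measurableSet_Ioc]
    filter_upwards with t ht
    rcases ht with ⟨ht0, ht1⟩
    rw [Real.norm_eq_abs, abs_mul, abs_of_nonneg (Real.rpow_nonneg ht0.le _)]
    calc |Real.exp (-t) - 1| * t ^ (a-1) ≤ t * t ^ (a-1) :=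
          mul_le_mul_of_nonneg_right (abs_exp_neg_sub_one_le ht0.le) (Real.rpow_nonneg ht0.le _)
      _ = t ^ a := by
          nth_rewrite 1 [← Real.rpow_one t]
          rw [← Real.rpow_add ht0]; ring_nf
  have hIoi : IntegrableOn (fun t => (Real.exp (-t) - 1) * t ^ (a - 1)) (Ioi (1:ℝ)) := by
    refine Integrable.mono' (integrableOn_Ioi_rpow_of_lt (by linarith : a - 1 < -1) one_pos)
      (CS_measOn measurableSet_Ioi (Ioi_subset_Ioi one_pos.le)) ?_
    rw [ae_restrict_iff' measurableSet_Ioi]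
    filter_upwards with t ht
    have ht0 : (0:ℝ) < t := lt_trans one_pos ht
    rw [Real.norm_eq_abs, abs_mul, abs_of_nonneg (Real.rpow_nonneg ht0.le _)]
    calc |Real.exp (-t) - 1| * t ^ (a-1) ≤ 1 * t ^ (a-1) :=
          mul_le_mul_of_nonneg_right (abs_exp_neg_sub_one_le_one ht0.le) (Real.rpow_nonneg ht0.le _)
      _ = t ^ (a-1) := one_mul _
  have hU : Ioc (0:ℝ) 1 ∪ Ioi 1 = Ioi 0 := Ioc_union_Ioi_eq_Ioi one_pos.le
  rw [← hU]
  exact hIoc.union hIoi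

lemma cauchy_saalschutz {a : ℝ} (h0 : -1 < a) (h1 : a < 0) :
    ∫ t in Ioi (0:ℝ), (Real.exp (-t) - 1) * t ^ (a - 1) = Real.Gamma a := by
  have ha : a ≠ 0 := ne_of_lt h1
  have ha1 : (0:ℝ) < a + 1 := by linarith
  set f : ℝ → ℝ := fun t => (Real.exp (-t) - 1) * t ^ a / a with hf_def
  set g : ℝ → ℝ := fun t => -(Real.exp (-t) * t ^ a) / a with hg_def
  set F : ℝ → ℝ := fun t => (Real.exp (-t) - 1) * t ^ (a - 1) + g t with hF_def
  -- derivative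
  have hderiv : ∀ t ∈ Ioi (0:ℝ), HasDerivAt f (F t) t := by
    intro t ht
    have hexp : HasDerivAt (fun t : ℝ => Real.exp (-t) - 1) (-Real.exp (-t)) t := by
      simpa using ((Real.hasDerivAt_exp (-t)).comp t (hasDerivAt_neg t)).sub_const 1
    have hpow : HasDerivAt (fun t : ℝ => t ^ a) (a * t ^ (a - 1)) t :=
      Real.hasDerivAt_rpow_const (Or.inl (ne_of_gt ht))
    have := (hexp.mul hpow).div_const a
    convert this using 1
    case e'_9 =>
      simp only [hF_def, hg_def]
      field_simp
      ring
    all_goals rfl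
  -- integrability of F
  have hg_int : IntegrableOn g (Ioi (0:ℝ)) := by
    have h := (Real.GammaIntegral_convergent ha1).neg.div_const a
    refine IntegrableOn.congr_fun h (fun t ht => ?_) measurableSet_Ioi
    simp only [hg_def, Pi.neg_apply, add_sub_cancel_right, neg_div]
  have hF_int : IntegrableOn F (Ioi (0:ℝ)) := (CS_integrable h0 h1).add hg_int
  -- continuity of f at 0 from the right
  have hf0 : f 0 = 0 := by
    simp [hf_def, Real.zero_rpow ha]
  have hcont : ContinuousWithinAt f (Ici (0:ℝ)) 0 := by
    rw [ContinuousWithinAt, hf0]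
    have hb : Tendsto (fun t : ℝ => t ^ (a + 1) / |a|) (nhdsWithin 0 (Ici 0)) (𝓝 0) := by
      have hc : ContinuousAt (fun t : ℝ => t ^ (a + 1)) 0 :=
        Real.continuousAt_rpow_const 0 (a + 1) (Or.inr ha1.le)
      have : Tendsto (fun t : ℝ => t ^ (a + 1)) (nhdsWithin 0 (Ici 0)) (𝓝 ((0:ℝ) ^ (a+1))) :=
        hc.continuousWithinAt
      rw [Real.zero_rpow (ne_of_gt ha1)] at this
      simpa using this.div_const |a|
    refine squeeze_zero_norm' ?_ hb
    filter_upwards [self_mem_nhdsWithin] with t (ht : t ∈ Ici (0:ℝ))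
    rcases eq_or_lt_of_le (show (0:ℝ) ≤ t from ht) with rfl | ht0
    · simp only [hf_def, Real.norm_eq_abs]
      rw [Real.zero_rpow ha]
      simp [abs_nonneg]
      positivity
    · simp only [hf_def, Real.norm_eq_abs, abs_div, abs_mul,
        abs_of_nonneg (Real.rpow_nonneg ht0.le a)]
      rw [div_le_div_iff_of_pos_right (abs_pos.mpr ha)]
      calc |Real.exp (-t) - 1| * t ^ a ≤ t * t ^ a :=
            mul_le_mul_of_nonneg_right (abs_exp_neg_sub_one_le ht0.le) (Real.rpow_nonneg ht0.le _)
        _ = t ^ (a + 1) := by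
            nth_rewrite 1 [← Real.rpow_one t]
            rw [← Real.rpow_add ht0]; ring_nf
  -- limit of f at infinity
  have htop : Tendsto f atTop (𝓝 0) := by
    have h1' : Tendsto (fun t : ℝ => Real.exp (-t) - 1) atTop (𝓝 (-1)) := by
      simpa using (Real.tendsto_exp_neg_atTop_nhds_zero).sub_const 1
    have h2' : Tendsto (fun t : ℝ => t ^ a) atTop (𝓝 0) := by
      have := tendsto_rpow_neg_atTop (y := -a) (by linarith)
      simpa using this
    have := (h1'.mul h2').div_const a
    simpa using this
  have hkey : ∫ t in Ioi (0:ℝ), F t = 0 := by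
    rw [integral_Ioi_of_hasDerivAt_of_tendsto hcont hderiv hF_int htop, hf0, sub_zero]
  -- split the integral
  have hsplit : ∫ t in Ioi (0:ℝ), F t =
      (∫ t in Ioi (0:ℝ), (Real.exp (-t) - 1) * t ^ (a - 1)) + ∫ t in Ioi (0:ℝ), g t :=
    integral_add (CS_integrable h0 h1) hg_int
  have hg_val : ∫ t in Ioi (0:ℝ), g t = -Real.Gamma a := by
    have hΓ : Real.Gamma (a + 1) = ∫ t in Ioi (0:ℝ), Real.exp (-t) * t ^ a := by
      rw [Real.Gamma_eq_integral ha1]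
      simp
    have : ∫ t in Ioi (0:ℝ), g t = (-(∫ t in Ioi (0:ℝ), Real.exp (-t) * t ^ a)) / a := by
      rw [← integral_neg, ← integral_div]
    rw [this, ← hΓ, Real.Gamma_add_one ha]
    field_simp
  have := hsplit
  rw [hkey, hg_val] at this
  linarith

lemma L0_value {m : ℝ} (hm : 3 < m) :
    ∫ s in Ioi (0:ℝ), (Real.exp (-s ^ (-(2*m))) - 1) * s ^ 2
      = (1/(2*m)) * Real.Gamma (-(3/(2*m))) := by
  have h2m : (0:ℝ) < 2*m := by linarith
  set a : ℝ := -(3/(2*m)) with ha_def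
  have ha0 : a < 0 := by
    rw [ha_def, neg_lt, neg_zero]
    positivity
  have ha1 : -1 < a := by
    rw [ha_def, neg_lt, neg_neg]
    rw [div_lt_one h2m]; linarith
  have hp : (-(2*m)) ≠ 0 := by linarith
  have key := integral_comp_rpow_Ioi (fun t => (Real.exp (-t) - 1) * t ^ (a - 1)) hp
  rw [cauchy_saalschutz ha1 ha0] at key
  have congr1 : ∫ x in Ioi (0:ℝ),
      (|(-(2*m))| * x ^ (-(2*m) - 1)) • ((fun t => (Real.exp (-t) - 1) * t ^ (a - 1)) (x ^ (-(2*m))))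
      = ∫ x in Ioi (0:ℝ), (2*m) * ((Real.exp (-x ^ (-(2*m))) - 1) * x ^ 2) := by
    refine setIntegral_congr_fun measurableSet_Ioi fun x hx => ?_
    have hx0 : (0:ℝ) < x := hx
    have e1 : |(-(2*m))| = 2*m := by rw [abs_neg, abs_of_pos h2m]
    have e2 : (x ^ (-(2*m))) ^ (a - 1) = x ^ ((-(2*m)) * (a-1)) :=
      (Real.rpow_mul hx0.le _ _).symm
    have e3 : (-(2*m)) * (a-1) = 3 + 2*m := by
      rw [ha_def]; field_simp; ring
    simp only [smul_eq_mul, e1, e2, e3]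
    have e4 : x ^ (-(2*m) - 1) * x ^ (3 + 2*m) = x ^ 2 := by
      rw [← Real.rpow_add hx0]
      rw [show (-(2*m) - 1) + (3 + 2*m) = (2:ℝ) by ring]
      rw [show ((2:ℝ)) = ((2:ℕ):ℝ) by norm_num, Real.rpow_natCast]
    calc (2*m) * x ^ (-(2*m) - 1) * ((Real.exp (-x ^ (-(2*m))) - 1) * x ^ (3 + 2*m))
        = (2*m) * ((Real.exp (-x ^ (-(2*m))) - 1) * (x ^ (-(2*m) - 1) * x ^ (3 + 2*m))) := by ring
      _ = (2*m) * ((Real.exp (-x ^ (-(2*m))) - 1) * x ^ 2) := by rw [e4]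
  rw [congr1, MeasureTheory.integral_const_mul] at key
  rw [← key]
  field_simp

lemma abs_exp_sub_one_le'' (x : ℝ) : |Real.exp x - 1| ≤ |x| * Real.exp |x| := by
  rcases le_or_gt x 0 with h | h
  · rw [abs_of_nonpos h]
    have h1 : Real.exp x ≤ 1 := Real.exp_le_one_iff.mpr h
    rw [abs_of_nonpos (by linarith)]
    have h2 : x + 1 ≤ Real.exp x := Real.add_one_le_exp x
    have h3 : (1:ℝ) ≤ Real.exp (-x) := Real.one_le_exp (by linarith)
    nlinarith
  · rw [abs_of_pos h, abs_of_nonneg (by nlinarith [Real.add_one_le_exp x] : (0:ℝ) ≤ Real.exp x - 1)]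
    have h2 : -x + 1 ≤ Real.exp (-x) := Real.add_one_le_exp (-x)
    have h3 : Real.exp (-x) * Real.exp x = 1 := by
      rw [← Real.exp_add]; simp
    nlinarith [Real.exp_pos x]

lemma abs_exp_sub_one_le_one {x : ℝ} (hx : x ≤ 0) : |Real.exp x - 1| ≤ 1 := by
  have h1 : Real.exp x ≤ 1 := Real.exp_le_one_iff.mpr hx
  rw [abs_of_nonpos (by linarith)]
  nlinarith [Real.exp_pos x]

/-- The dominating function. -/
noncomputable def mieBound (m : ℝ) : ℝ → ℝ :=
  fun s => if s ≤ 1 then s ^ 2 else (2 * Real.exp 2) * s ^ (2 - m)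

lemma mieBound_integrable {m : ℝ} (hm : 3 < m) :
    Integrable (mieBound m) (volume.restrict (Ioi (0:ℝ))) := by
  have hIoc : IntegrableOn (mieBound m) (Ioc (0:ℝ) 1) := by
    refine IntegrableOn.congr_fun (((continuous_pow 2).intervalIntegrable 0 1).1)
      (fun s hs => ?_) measurableSet_Ioc
    simp [mieBound, if_pos hs.2]
  have hIoi : IntegrableOn (mieBound m) (Ioi (1:ℝ)) := by
    refine IntegrableOn.congr_fun
      (((integrableOn_Ioi_rpow_of_lt (by linarith : 2 - m < -1) one_pos)).const_mul
        (2 * Real.exp 2)) (fun s hs => ?_) measurableSet_Ioi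
    simp [mieBound, if_neg (not_le.mpr (show (1:ℝ) < s from hs))]
  have hU : Ioc (0:ℝ) 1 ∪ Ioi 1 = Ioi 0 := Ioc_union_Ioi_eq_Ioi one_pos.le
  rw [show (Ioi (0:ℝ)) = Ioc (0:ℝ) 1 ∪ Ioi 1 from hU.symm]
  exact hIoc.union hIoi

lemma mie_pointwise_bound {m ε s : ℝ} (hm : 3 < m) (hε0 : 0 < ε) (hε1 : ε ≤ 1) (hs : 0 < s) :
    |(Real.exp (-s ^ (-(2*m)) + ε * s ^ (-m)) - 1) * s ^ 2| ≤ mieBound m s := by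
  set u : ℝ := s ^ (-m) with hu_def
  have hu0 : 0 < u := Real.rpow_pos_of_pos hs _
  have huu : s ^ (-(2*m)) = u ^ 2 := by
    rw [hu_def, show (-(2*m)) = (-m) * ((2:ℕ):ℝ) by push_cast; ring, Real.rpow_mul hs.le,
      Real.rpow_natCast]
  rw [abs_mul, abs_of_nonneg (sq_nonneg s), huu]
  rcases le_or_gt s 1 with hs1 | hs1
  · have hu1 : 1 ≤ u := Real.one_le_rpow_of_pos_of_le_one_of_nonpos hs hs1 (by linarith)
    have hx : -u ^ 2 + ε * u ≤ 0 := by nlinarith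
    have := abs_exp_sub_one_le_one hx
    rw [mieBound, if_pos hs1]
    calc |Real.exp (-u ^ 2 + ε * u) - 1| * s ^ 2 ≤ 1 * s ^ 2 :=
          mul_le_mul_of_nonneg_right this (sq_nonneg s)
      _ = s ^ 2 := one_mul _
  · have hu1 : u ≤ 1 := Real.rpow_le_one_of_one_le_of_nonpos hs1.le (by linarith)
    have hxabs : |(-u ^ 2 + ε * u)| ≤ 2 * u := by
      rw [abs_le]; constructor <;> nlinarith
    have h2 : |(-u ^ 2 + ε * u)| ≤ 2 := by nlinarith
    have hE : |Real.exp (-u ^ 2 + ε * u) - 1| ≤ (2 * Real.exp 2) * u := by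
      calc |Real.exp (-u ^ 2 + ε * u) - 1|
          ≤ |(-u ^ 2 + ε * u)| * Real.exp |(-u ^ 2 + ε * u)| := abs_exp_sub_one_le'' _
        _ ≤ (2 * u) * Real.exp 2 := by
            apply mul_le_mul hxabs (Real.exp_le_exp.mpr h2) (Real.exp_pos _).le
            positivity
        _ = (2 * Real.exp 2) * u := by ring
    rw [mieBound, if_neg (not_le.mpr hs1)]
    calc |Real.exp (-u ^ 2 + ε * u) - 1| * s ^ 2 ≤ ((2 * Real.exp 2) * u) * s ^ 2 :=
          mul_le_mul_of_nonneg_right hE (sq_nonneg s)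
      _ = (2 * Real.exp 2) * (u * s ^ 2) := by ring
      _ = (2 * Real.exp 2) * s ^ (2 - m) := by
          rw [hu_def, show (s:ℝ) ^ (2:ℕ) = s ^ ((2:ℕ):ℝ) from (Real.rpow_natCast s 2).symm,
            ← Real.rpow_add hs]
          norm_num
          ring_nf

lemma G_tendsto {m : ℝ} (hm : 3 < m) :
    Tendsto (fun T : ℝ => ∫ s in Ioi (0:ℝ),
        (Real.exp (-s ^ (-(2*m)) + T ^ (-(1/2):ℝ) * s ^ (-m)) - 1) * s ^ 2) atTop
      (𝓝 (∫ s in Ioi (0:ℝ), (Real.exp (-s ^ (-(2*m))) - 1) * s ^ 2)) := by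
  refine tendsto_integral_filter_of_dominated_convergence (mieBound m) ?_ ?_
    (mieBound_integrable hm) ?_
  · filter_upwards with T
    refine ContinuousOn.aestronglyMeasurable ?_ measurableSet_Ioi
    refine ContinuousOn.mul ?_ (continuous_pow 2).continuousOn
    refine ContinuousOn.sub ?_ continuousOn_const
    refine Real.continuous_exp.comp_continuousOn ?_
    exact ((contOn_rpow_const _).neg).add (continuousOn_const.mul (contOn_rpow_const _))
  · filter_upwards [eventually_ge_atTop (1:ℝ)] with T hT
    rw [ae_restrict_iff' measurableSet_Ioi]
    filter_upwards with s hs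
    have hT0 : (0:ℝ) < T := lt_of_lt_of_le one_pos hT
    have hε0 : 0 < T ^ (-(1/2):ℝ) := Real.rpow_pos_of_pos hT0 _
    have hε1 : T ^ (-(1/2):ℝ) ≤ 1 := Real.rpow_le_one_of_one_le_of_nonpos hT (by norm_num)
    rw [Real.norm_eq_abs]
    exact mie_pointwise_bound hm hε0 hε1 hs
  · rw [ae_restrict_iff' measurableSet_Ioi]
    filter_upwards with s hs
    have h1 : Tendsto (fun T : ℝ => T ^ (-(1/2):ℝ)) atTop (𝓝 0) := by
      have := tendsto_rpow_neg_atTop (y := (1/2:ℝ)) (by norm_num)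
      simpa using this
    have h2 : Continuous (fun ε : ℝ => (Real.exp (-s ^ (-(2*m)) + ε * s ^ (-m)) - 1) * s ^ 2) := by
      continuity
    have := (h2.tendsto 0).comp h1
    simpa [Function.comp_def] using this

lemma mie_scale {m σ T : ℝ} (hm : 3 < m) (hσ : 0 < σ) (hT : 0 < T) :
    ∫ r in Ioi (0:ℝ), (Real.exp (-(1 / T) * ((σ / r) ^ (2 * m) - (σ / r) ^ m)) - 1) * r ^ 2
      = σ ^ 3 * T ^ (-(3/(2*m))) *
        ∫ s in Ioi (0:ℝ), (Real.exp (-s ^ (-(2*m)) + T ^ (-(1/2):ℝ) * s ^ (-m)) - 1) * s ^ 2 := by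
  have hm0 : (0:ℝ) < m := by linarith
  have h2m : (0:ℝ) < 2*m := by linarith
  set c : ℝ := σ * T ^ (-(1/(2*m))) with hc_def
  have hc : 0 < c := by positivity
  set F : ℝ → ℝ := fun r =>
    (Real.exp (-(1 / T) * ((σ / r) ^ (2 * m) - (σ / r) ^ m)) - 1) * r ^ 2 with hF_def
  have hsub := integral_comp_mul_left_Ioi F 0 hc
  rw [mul_zero, smul_eq_mul] at hsub
  have hstep : ∀ x ∈ Ioi (0:ℝ), F (c * x) =
      c ^ 2 * ((Real.exp (-x ^ (-(2*m)) + T ^ (-(1/2):ℝ) * x ^ (-m)) - 1) * x ^ 2) := by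
    intro x hx
    have hx0 : (0:ℝ) < x := hx
    have hTu : (0:ℝ) < T ^ (1/(2*m)) := Real.rpow_pos_of_pos hT _
    have hq : σ / (c * x) = T ^ (1/(2*m)) / x := by
      rw [hc_def, Real.rpow_neg hT.le]
      field_simp
    have h2 : (σ / (c * x)) ^ (2*m) = T * x ^ (-(2*m)) := by
      rw [hq, Real.div_rpow hTu.le hx0.le, ← Real.rpow_mul hT.le,
        show (1/(2*m))*(2*m) = (1:ℝ) by field_simp, Real.rpow_one,
        Real.rpow_neg hx0.le, div_eq_mul_inv]
    have h3 : (σ / (c * x)) ^ m = T ^ ((1:ℝ)/2) * x ^ (-m) := by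
      rw [hq, Real.div_rpow hTu.le hx0.le, ← Real.rpow_mul hT.le,
        show (1/(2*m))*m = (1:ℝ)/2 by field_simp,
        Real.rpow_neg hx0.le, div_eq_mul_inv]
    have hTh : T ^ (-(1/2):ℝ) = T ^ ((1:ℝ)/2) / T := by
      rw [show (-(1/2):ℝ) = (1:ℝ)/2 - 1 by norm_num, Real.rpow_sub hT, Real.rpow_one]
    have hexp : -(1 / T) * ((σ / (c*x)) ^ (2*m) - (σ / (c*x)) ^ m)
        = -x ^ (-(2*m)) + T ^ (-(1/2):ℝ) * x ^ (-m) := by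
      rw [h2, h3, hTh]
      field_simp
      ring
    simp only [hF_def, hexp, mul_pow]
    ring
  have hcongr : ∫ x in Ioi (0:ℝ), F (c * x)
      = c ^ 2 * ∫ x in Ioi (0:ℝ),
          (Real.exp (-x ^ (-(2*m)) + T ^ (-(1/2):ℝ) * x ^ (-m)) - 1) * x ^ 2 := by
    rw [← MeasureTheory.integral_const_mul]
    exact setIntegral_congr_fun measurableSet_Ioi hstep
  have hc3 : c * c ^ 2 = σ ^ 3 * T ^ (-(3/(2*m))) := by
    rw [hc_def, mul_pow, ← Real.rpow_natCast (T ^ (-(1/(2*m)))) 2, ← Real.rpow_mul hT.le]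
    rw [show σ * (T ^ (-(1/(2*m)))) * (σ^2 * T ^ ((-(1/(2*m))) * ((2:ℕ):ℝ)))
        = σ^3 * (T ^ (-(1/(2*m))) * T ^ ((-(1/(2*m))) * ((2:ℕ):ℝ))) by ring,
      ← Real.rpow_add hT, show (-(1/(2*m))) + (-(1/(2*m))) * ((2:ℕ):ℝ) = -(3/(2*m)) by
        push_cast; field_simp; ring]
  calc ∫ r in Ioi (0:ℝ), F r = c * ∫ x in Ioi (0:ℝ), F (c * x) := by
        rw [hsub]; field_simp
    _ = c * (c ^ 2 * ∫ x in Ioi (0:ℝ),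
          (Real.exp (-x ^ (-(2*m)) + T ^ (-(1/2):ℝ) * x ^ (-m)) - 1) * x ^ 2) := by rw [hcongr]
    _ = σ ^ 3 * T ^ (-(3/(2*m))) * ∫ x in Ioi (0:ℝ),
          (Real.exp (-x ^ (-(2*m)) + T ^ (-(1/2):ℝ) * x ^ (-m)) - 1) * x ^ 2 := by
        rw [← mul_assoc, hc3]

/-- High-temperature behavior for the Mie potential with `n = 2m`, `m > 3`, `σ > 0`:
`B(T) T^{3/(2m)} → -(πσ³/m) Γ(-3/(2m))` as `T → ∞`, and this limit is positive. -/
theorem second_virial_high_temperature_n_eq_two_m (m σ : ℝ) (hm : 3 < m) (hσ : 0 < σ)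
    (B : ℝ → ℝ)
    (hB : ∀ T : ℝ, B T = -2 * π * ∫ r in Set.Ioi (0 : ℝ),
        (Real.exp (-(1 / T) * ((σ / r) ^ (2 * m) - (σ / r) ^ m)) - 1) * r ^ 2) :
    Tendsto (fun T : ℝ => B T * T ^ (3 / (2 * m))) atTop
        (nhds (-(π * σ ^ 3 / m) * Real.Gamma (-(3 / (2 * m)))))
      ∧ 0 < -(π * σ ^ 3 / m) * Real.Gamma (-(3 / (2 * m))) := by
  have hm0 : (0:ℝ) < m := by linarith
  have h2m : (0:ℝ) < 2*m := by linarith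
  have hΓ : Real.Gamma (-(3/(2*m))) < 0 := by
    have ha0 : -(3/(2*m)) < 0 := by
      rw [neg_lt, neg_zero]; positivity
    have h := Real.Gamma_add_one (ne_of_lt ha0)
    have hlt1 : 3/(2*m) < 1 := by rw [div_lt_one h2m]; linarith
    have hpos : 0 < Real.Gamma (-(3/(2*m)) + 1) := Real.Gamma_pos_of_pos (by linarith)
    nlinarith
  have hlimpos : 0 < -(π * σ ^ 3 / m) * Real.Gamma (-(3/(2*m))) := by
    have hc : (0:ℝ) < π * σ^3 / m := by positivity
    nlinarith
  refine ⟨?_, hlimpos⟩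
  have htend := (G_tendsto hm).const_mul (-2*π*σ^3)
  rw [L0_value hm] at htend
  have hval : (-2*π*σ^3) * ((1/(2*m)) * Real.Gamma (-(3/(2*m))))
      = -(π * σ ^ 3 / m) * Real.Gamma (-(3/(2*m))) := by
    field_simp
  rw [hval] at htend
  refine htend.congr' ?_
  filter_upwards [eventually_gt_atTop (0:ℝ)] with T hT
  rw [hB T, mie_scale hm hσ hT]
  have hTp : T ^ (-(3/(2*m))) * T ^ (3/(2*m)) = 1 := by
    rw [← Real.rpow_add hT]
    simp
  linear_combination (2*π*σ^3 * (∫ s in Ioi (0:ℝ),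
      (Real.exp (-s ^ (-(2*m)) + T ^ (-(1/2):ℝ) * s ^ (-m)) - 1) * s ^ 2)) * hTp
end

section
/- Let m > 3 be a real number, σ > 0, and set n = 2m. Let B(T) = -2π ∫₀^∞ [exp(-(1/T)((σ/r)^{2m} - (σ/r)^m)) - 1] r² dr. Then, as T → 0⁺, the ratio B(T) / ( -2^{2 + 3/m} (π^{3/2} σ³ / m) √T · exp(1/(4T)) ) tends to 1; that is, B(T) is asymptotic to -2^{2+3/m} (π^{3/2} σ³/m) √T · e^{1/(4T)} as T → 0⁺. -/
open Real Filter MeasureTheory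

lemma meas1 (T p : ℝ) : Measurable (fun u : ℝ => Real.exp (-(u-1/2)^2/T) * u ^ p) := by
  measurability
lemma meas2 (T p : ℝ) : Measurable (fun u : ℝ => (Real.exp ((u - u^2)/T) - 1) * u ^ p) := by
  measurability

lemma exp_sub_one_le_mul (x : ℝ) : Real.exp x - 1 ≤ x * Real.exp x := by
  have h := mul_le_mul_of_nonneg_right (Real.add_one_le_exp (-x)) (Real.exp_pos x).le
  rw [Real.exp_neg, inv_mul_cancel₀ (Real.exp_pos x).ne'] at h
  nlinarith

lemma inv_tail (s b : ℝ) (hb : 0 < b) :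
    Tendsto (fun T : ℝ => (1/T) ^ (s:ℝ) * Real.exp (-b * (1/T)))
      (nhdsWithin 0 (Set.Ioi 0)) (nhds 0) := by
  have := (tendsto_rpow_mul_exp_neg_mul_atTop_nhds_zero s b hb).comp
    (tendsto_inv_nhdsGT_zero (𝕜 := ℝ))
  simpa [Function.comp_def, one_div] using this

lemma bridge1 (T : ℝ) (hT : 0 < T) (K : ℝ) :
    Real.exp (1/(8*T))/T * K / (Real.sqrt T * Real.exp (1/(4*T)))
      = K * ((1/T) ^ ((3:ℝ)/2) * Real.exp (-(1/8) * (1/T))) := by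
  have hsT : 0 < Real.sqrt T := Real.sqrt_pos.mpr hT
  have h1 : (1/T : ℝ) ^ ((3:ℝ)/2) = 1 / (T * Real.sqrt T) := by
    rw [one_div, ← Real.rpow_neg_one T, ← Real.rpow_mul hT.le,
      show (-1 * ((3:ℝ)/2)) = -(3/2) by norm_num, Real.rpow_neg hT.le,
      show ((3:ℝ)/2) = 1 + 1/2 by norm_num, Real.rpow_add hT, Real.rpow_one,
      ← Real.sqrt_eq_rpow, one_div]
  have h2 : Real.exp (-(1/8) * (1/T)) = Real.exp (1/(8*T)) / Real.exp (1/(4*T)) := by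
    rw [← Real.exp_sub]; congr 1; field_simp; ring
  rw [h1, h2]
  have he : Real.exp (1/(4*T)) ≠ 0 := (Real.exp_pos _).ne'
  field_simp
lemma bridge2 (T : ℝ) (hT : 0 < T) (C : ℝ) :
    C / (Real.sqrt T * Real.exp (1/(4*T)))
      = C * ((1/T) ^ ((1:ℝ)/2) * Real.exp (-(1/4) * (1/T))) := by
  have hsT : 0 < Real.sqrt T := Real.sqrt_pos.mpr hT
  have h1 : (1/T : ℝ) ^ ((1:ℝ)/2) = 1 / Real.sqrt T := by
    rw [one_div, ← Real.rpow_neg_one T, ← Real.rpow_mul hT.le,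
      show (-1 * ((1:ℝ)/2)) = -(1/2) by norm_num, Real.rpow_neg hT.le,
      ← Real.sqrt_eq_rpow, one_div]
  have h2 : Real.exp (-(1/4) * (1/T)) = 1 / Real.exp (1/(4*T)) := by
    rw [show (-(1/4:ℝ) * (1/T)) = -(1/(4*T)) by field_simp, Real.exp_neg, ← one_div]
  rw [h1, h2]
  field_simp

lemma M_asymp (p : ℝ) (hp : p < 0) :
    Tendsto (fun T : ℝ =>
        (∫ u in Set.Ioi (1/8:ℝ), Real.exp (-(u-1/2)^2/T) * u ^ p) / Real.sqrt T)
      (nhdsWithin 0 (Set.Ioi 0)) (nhds (Real.sqrt π * (1/2:ℝ) ^ p)) := by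
  have hmeas : ∀ T : ℝ, Measurable (fun u : ℝ => Real.exp (-(u-1/2)^2/T) * u ^ p) := by
    intro T; measurability
  set ψ : ℝ → ℝ → ℝ := fun T s => (Set.Ioi (1/8:ℝ)).indicator
      (fun u => Real.exp (-(u-1/2)^2/T) * u ^ p) (Real.sqrt T * s + 1/2) with hψ
  have key : ∀ T ∈ Set.Ioi (0:ℝ),
      (∫ u in Set.Ioi (1/8:ℝ), Real.exp (-(u-1/2)^2/T) * u ^ p) / Real.sqrt T
      = ∫ s, ψ T s := by
    intro T hT
    have hT' : (0:ℝ) < T := hT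
    have hsT : 0 < Real.sqrt T := Real.sqrt_pos.mpr hT'
    rw [← integral_indicator measurableSet_Ioi,
      ← integral_add_right_eq_self (fun x => (Set.Ioi (1/8:ℝ)).indicator
        (fun u => Real.exp (-(u-1/2)^2/T) * u ^ p) x) (1/2)]
    have := MeasureTheory.Measure.integral_comp_mul_left
      (fun x => (Set.Ioi (1/8:ℝ)).indicator
        (fun u => Real.exp (-(u-1/2)^2/T) * u ^ p) (x + 1/2)) (Real.sqrt T)
    rw [this, abs_of_pos (inv_pos.mpr hsT), smul_eq_mul, ← div_eq_inv_mul]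
  have h1 : ∀ s : ℝ, Tendsto (fun T : ℝ => Real.sqrt T * s + 1/2)
      (nhdsWithin 0 (Set.Ioi 0)) (nhds (1/2)) := by
    intro s
    have h0 : Tendsto Real.sqrt (nhdsWithin 0 (Set.Ioi 0)) (nhds 0) := by
      have := (Real.continuous_sqrt.tendsto 0)
      rw [Real.sqrt_zero] at this
      exact this.mono_left nhdsWithin_le_nhds
    have := (h0.mul_const s).add_const (1/2:ℝ)
    simpa using this
  have hlim : ∀ s : ℝ, Tendsto (fun T => ψ T s) (nhdsWithin 0 (Set.Ioi 0))
      (nhds (Real.exp (-s^2) * (1/2:ℝ) ^ p)) := by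
    intro s
    refine Tendsto.congr' ?_ (tendsto_const_nhds.mul ((h1 s).rpow_const
      (Or.inl (by norm_num))))
    filter_upwards [self_mem_nhdsWithin,
      (h1 s).eventually (Ioi_mem_nhds (by norm_num : (1/8:ℝ) < 1/2))] with T hT hmem
    have hT' : (0:ℝ) < T := hT
    have hmem' : Real.sqrt T * s + 1/2 ∈ Set.Ioi (1/8:ℝ) := hmem
    simp only [hψ]
    rw [Set.indicator_of_mem hmem']
    congr 2
    rw [add_sub_cancel_right, mul_pow, Real.sq_sqrt hT'.le, neg_div,
      mul_div_cancel_left₀ _ hT'.ne']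
  have hbound : Integrable (fun s : ℝ => (8:ℝ) ^ (-p) * Real.exp (-s^2)) := by
    have : Integrable (fun s : ℝ => Real.exp (-1 * s^2)) :=
      integrable_exp_neg_mul_sq (by norm_num)
    simpa using this.const_mul ((8:ℝ) ^ (-p))
  have hDCT : Tendsto (fun T => ∫ s, ψ T s) (nhdsWithin 0 (Set.Ioi 0))
      (nhds (∫ s, Real.exp (-s^2) * (1/2:ℝ) ^ p)) := by
    refine tendsto_integral_filter_of_dominated_convergence _ ?_ ?_ hbound
      (Eventually.of_forall hlim)
    · refine Eventually.of_forall (fun T => ?_)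
      exact (((hmeas T).indicator measurableSet_Ioi).comp
        ((measurable_id.const_mul _).add_const _)).aestronglyMeasurable
    · filter_upwards [self_mem_nhdsWithin] with T hT
      refine Eventually.of_forall (fun s => ?_)
      have hT' : (0:ℝ) < T := hT
      by_cases hmem : Real.sqrt T * s + 1/2 ∈ Set.Ioi (1/8:ℝ)
      · simp only [hψ, Set.indicator_of_mem hmem]
        have hu : (1/8:ℝ) < Real.sqrt T * s + 1/2 := hmem
        have hexp : Real.exp (-(Real.sqrt T * s + 1/2 - 1/2)^2/T) = Real.exp (-s^2) := by
          congr 1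
          rw [add_sub_cancel_right, mul_pow, Real.sq_sqrt hT'.le, neg_div,
            mul_div_cancel_left₀ _ hT'.ne']
        rw [norm_eq_abs, abs_mul, hexp]
        have hup : |(Real.sqrt T * s + 1/2) ^ p| = (Real.sqrt T * s + 1/2) ^ p :=
          abs_of_nonneg (Real.rpow_nonneg (by linarith) p)
        have h8 : (Real.sqrt T * s + 1/2) ^ p ≤ (1/8:ℝ) ^ p :=
          Real.rpow_le_rpow_of_nonpos (by norm_num) hu.le hp.le
        have h18 : ((1/8:ℝ):ℝ) ^ p = (8:ℝ) ^ (-p) := by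
          rw [one_div, Real.inv_rpow (by norm_num), ← Real.rpow_neg (by norm_num)]
        rw [abs_exp, hup]
        calc Real.exp (-s^2) * (Real.sqrt T * s + 1/2) ^ p
            ≤ Real.exp (-s^2) * (8:ℝ)^(-p) := by
              refine mul_le_mul_of_nonneg_left ?_ (Real.exp_nonneg _)
              rw [← h18]; exact h8
          _ = (8:ℝ)^(-p) * Real.exp (-s^2) := mul_comm _ _
      · simp only [hψ, Set.indicator_of_notMem hmem, norm_zero]
        positivity
  have hval : (∫ s, Real.exp (-s^2) * (1/2:ℝ) ^ p) = Real.sqrt π * (1/2:ℝ) ^ p := by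
    rw [integral_mul_const]
    congr 1
    have := integral_gaussian 1
    simpa using this
  rw [hval] at hDCT
  refine Tendsto.congr' ?_ hDCT
  filter_upwards [self_mem_nhdsWithin] with T hT
  exact (key T hT).symm

lemma subst_lemma (m σ T : ℝ) (hm : 3 < m) (hσ : 0 < σ) :
    (∫ r in Set.Ioi (0:ℝ), (Real.exp (-(1/T) * ((σ/r)^(2*m) - (σ/r)^m)) - 1) * r^2)
    = (σ^3/m) * ∫ u in Set.Ioi (0:ℝ), (Real.exp ((u - u^2)/T) - 1) * u ^ (-(1+3/m)) := by
  have hm0 : (0:ℝ) < m := by linarith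
  set f : ℝ → ℝ := fun u => σ * u ^ (-m⁻¹) with hf
  have himg : Set.Ioi (0:ℝ) = f '' Set.Ioi 0 := by
    ext r
    simp only [Set.mem_image, Set.mem_Ioi]
    constructor
    · intro hr
      refine ⟨(σ/r) ^ m, by positivity, ?_⟩
      show σ * ((σ/r) ^ m) ^ (-m⁻¹) = r
      rw [← Real.rpow_mul (by positivity), mul_neg, mul_inv_cancel₀ hm0.ne',
        Real.rpow_neg_one]
      field_simp
    · rintro ⟨u, hu, rfl⟩
      show (0:ℝ) < σ * u ^ (-m⁻¹)
      have : (0:ℝ) < u := hu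
      positivity
  have hderiv : ∀ u ∈ Set.Ioi (0:ℝ),
      HasDerivWithinAt f (σ * (-m⁻¹ * u ^ (-m⁻¹ - 1))) (Set.Ioi 0) u := by
    intro u hu
    exact ((Real.hasDerivAt_rpow_const (p := -m⁻¹)
      (Or.inl (ne_of_gt hu))).const_mul σ).hasDerivWithinAt
  have hinj : Set.InjOn f (Set.Ioi 0) := by
    intro u hu v hv h
    have hu' : (0:ℝ) < u := hu
    have hv' : (0:ℝ) < v := hv
    have h2 : u ^ (-m⁻¹) = v ^ (-m⁻¹) := mul_left_cancel₀ hσ.ne' h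
    have h3 : (u ^ (-m⁻¹)) ^ (-m) = (v ^ (-m⁻¹)) ^ (-m) := by rw [h2]
    rwa [← Real.rpow_mul hu'.le, ← Real.rpow_mul hv'.le, neg_mul_neg,
      inv_mul_cancel₀ hm0.ne', Real.rpow_one, Real.rpow_one] at h3
  conv_lhs => rw [himg]
  rw [integral_image_eq_integral_abs_deriv_smul measurableSet_Ioi hderiv hinj,
    ← integral_const_mul]
  refine setIntegral_congr_fun measurableSet_Ioi (fun u hu => ?_)
  have hu' : (0:ℝ) < u := hu
  have hfu : (0:ℝ) < f u := by simp only [hf]; positivity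
  have h1 : σ / f u = u ^ (m⁻¹ : ℝ) := by
    simp only [hf]
    rw [Real.rpow_neg hu'.le, div_mul_eq_div_div, div_self hσ.ne', one_div, inv_inv]
  have h2 : (σ / f u) ^ m = u := by
    rw [h1, ← Real.rpow_mul hu'.le, inv_mul_cancel₀ hm0.ne', Real.rpow_one]
  have h3 : (σ / f u) ^ (2*m) = u ^ 2 := by
    rw [h1, ← Real.rpow_mul hu'.le, show m⁻¹ * (2*m) = 2 by field_simp, Real.rpow_two]
  have h4 : (f u) ^ 2 = σ^2 * u ^ (-(2/m)) := by
    have e : (u ^ (-m⁻¹:ℝ))^(2:ℕ) = u ^ (-(2/m):ℝ) := by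
      rw [← Real.rpow_natCast (u ^ (-m⁻¹:ℝ)) 2, ← Real.rpow_mul hu'.le]
      norm_num
      rw [div_eq_mul_inv, mul_comm]
    show (σ * u ^ (-m⁻¹ : ℝ))^2 = _
    rw [mul_pow, e]
  have h5 : |σ * (-m⁻¹ * u ^ (-m⁻¹ - 1))| = σ * m⁻¹ * u ^ (-m⁻¹ - 1) := by
    rw [show σ * (-m⁻¹ * u ^ (-m⁻¹-1)) = -(σ * m⁻¹ * u^(-m⁻¹-1)) by ring, abs_neg,
      abs_of_nonneg (by positivity)]
  rw [h5, h3, h2, h4, smul_eq_mul,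
    show -(1/T)*(u^2-u) = (u-u^2)/T by ring,
    show σ * m⁻¹ * u ^ (-m⁻¹-1) * ((Real.exp ((u-u^2)/T) - 1) * (σ^2 * u ^ (-(2/m))))
      = σ^3/m * ((Real.exp ((u-u^2)/T) - 1) * (u ^ (-m⁻¹-1) * u ^ (-(2/m)))) by ring,
    ← Real.rpow_add hu']
  congr 2
  field_simp
  ring

lemma J_asymp (m : ℝ) (hm : 3 < m) :
    Tendsto (fun T : ℝ =>
        (∫ u in Set.Ioi (0:ℝ), (Real.exp ((u - u^2)/T) - 1) * u ^ (-(1+3/m)))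
          / (Real.sqrt T * Real.exp (1/(4*T))))
      (nhdsWithin 0 (Set.Ioi 0)) (nhds (Real.sqrt π * (1/2:ℝ) ^ (-(1+3/m)))) := by
  have hm0 : (0:ℝ) < m := by linarith
  set p : ℝ := -(1+3/m) with hpdef
  have h3m : 3/m < 1 := (div_lt_one hm0).mpr (by linarith)
  have h3m0 : 0 < 3/m := by positivity
  have hp0 : p < 0 := by rw [hpdef]; nlinarith
  have hp1 : p < -1 := by rw [hpdef]; nlinarith
  have hp2 : (-1:ℝ) < p + 1 := by rw [hpdef]; nlinarith
  set K : ℝ := ∫ u in Set.Ioc (0:ℝ) (1/8), u ^ (p+1) with hKdef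
  set C : ℝ := ∫ u in Set.Ioi (1/8:ℝ), u ^ p with hCdef
  set M : ℝ → ℝ := fun T => ∫ u in Set.Ioi (1/8:ℝ), Real.exp (-(u-1/2)^2/T) * u ^ p
    with hMdef
  set E : ℝ → ℝ := fun T => ∫ u in Set.Ioc (0:ℝ) (1/8),
    (Real.exp ((u - u^2)/T) - 1) * u ^ p with hEdef
  have hKint : IntegrableOn (fun u : ℝ => u ^ (p+1)) (Set.Ioc 0 (1/8)) :=
    (intervalIntegrable_iff_integrableOn_Ioc_of_le (by norm_num)).mp
      (intervalIntegral.intervalIntegrable_rpow' hp2)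
  have hCint : IntegrableOn (fun u : ℝ => u ^ p) (Set.Ioi (1/8)) :=
    integrableOn_Ioi_rpow_of_lt hp1 (by norm_num)
  -- pointwise bound on the small interval
  have hFIocBound : ∀ T ∈ Set.Ioi (0:ℝ), ∀ u ∈ Set.Ioc (0:ℝ) (1/8),
      ‖(Real.exp ((u - u^2)/T) - 1) * u ^ p‖ ≤ Real.exp (1/(8*T))/T * u ^ (p+1) := by
    intro T hT u hu
    have hT' : (0:ℝ) < T := hT
    obtain ⟨hu0, hu8⟩ := hu
    have hup : (0:ℝ) ≤ u ^ p := Real.rpow_nonneg hu0.le p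
    have hx0 : 0 ≤ (u - u^2)/T := by
      apply div_nonneg _ hT'.le; nlinarith
    have hxle : (u - u^2)/T ≤ 1/(8*T) := by
      rw [div_le_div_iff₀ hT' (by positivity)]
      nlinarith
    have hexp1 : (1:ℝ) ≤ Real.exp ((u - u^2)/T) := by
      rw [← Real.exp_zero]; exact Real.exp_le_exp.mpr hx0
    rw [norm_eq_abs, abs_mul, abs_of_nonneg (by linarith : (0:ℝ) ≤ Real.exp ((u - u^2)/T) - 1),
      abs_of_nonneg hup]
    have step1 : Real.exp ((u - u^2)/T) - 1 ≤ (u/T) * Real.exp (1/(8*T)) := by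
      calc Real.exp ((u - u^2)/T) - 1 ≤ ((u - u^2)/T) * Real.exp ((u - u^2)/T) :=
            exp_sub_one_le_mul _
        _ ≤ (u/T) * Real.exp (1/(8*T)) := by
            apply mul_le_mul _ (Real.exp_le_exp.mpr hxle) (Real.exp_pos _).le
              (by positivity)
            rw [div_le_div_iff₀ hT' hT']
            nlinarith
    calc (Real.exp ((u - u^2)/T) - 1) * u ^ p ≤ (u/T) * Real.exp (1/(8*T)) * u ^ p := by
          apply mul_le_mul_of_nonneg_right step1 hup
      _ = Real.exp (1/(8*T))/T * u ^ (p+1) := by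
          rw [Real.rpow_add_one hu0.ne' p]; ring
  have hEbound : ∀ T ∈ Set.Ioi (0:ℝ), ‖E T‖ ≤ Real.exp (1/(8*T))/T * K := by
    intro T hT
    calc ‖E T‖ ≤ ∫ u in Set.Ioc (0:ℝ) (1/8), Real.exp (1/(8*T))/T * u ^ (p+1) :=
          norm_integral_le_of_norm_le (hKint.const_mul _)
            ((ae_restrict_iff' measurableSet_Ioc).mpr
              (Eventually.of_forall (hFIocBound T hT)))
      _ = Real.exp (1/(8*T))/T * K := integral_const_mul _ _
  have hK0 : 0 ≤ K :=
    setIntegral_nonneg measurableSet_Ioc (fun u hu => Real.rpow_nonneg hu.1.le _)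
  have main : ∀ T ∈ Set.Ioi (0:ℝ),
      (∫ u in Set.Ioi (0:ℝ), (Real.exp ((u - u^2)/T) - 1) * u ^ p)
        / (Real.sqrt T * Real.exp (1/(4*T)))
      = M T / Real.sqrt T
        + (E T / (Real.sqrt T * Real.exp (1/(4*T)))
          - C / (Real.sqrt T * Real.exp (1/(4*T)))) := by
    intro T hT
    have hT' : (0:ℝ) < T := hT
    have hsT : 0 < Real.sqrt T := Real.sqrt_pos.mpr hT'
    have heT : 0 < Real.exp (1/(4*T)) := Real.exp_pos _
    have hMint : IntegrableOn (fun u : ℝ => Real.exp (-(u-1/2)^2/T) * u ^ p)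
        (Set.Ioi (1/8)) := by
      refine hCint.mono' (meas1 T p).aestronglyMeasurable ?_
      refine (ae_restrict_iff' measurableSet_Ioi).mpr (Eventually.of_forall fun u hu => ?_)
      have hu' : (0:ℝ) < u := lt_trans (by norm_num) hu
      rw [norm_eq_abs, abs_mul, abs_exp, abs_of_nonneg (Real.rpow_nonneg hu'.le p)]
      have h1 : Real.exp (-(u-1/2)^2/T) ≤ 1 := by
        rw [Real.exp_le_one_iff]
        apply div_nonpos_of_nonpos_of_nonneg (neg_nonpos.mpr (sq_nonneg _)) hT'.le
      nlinarith [Real.rpow_nonneg hu'.le p]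
    have hEqOn : Set.EqOn
        (fun u : ℝ => Real.exp (1/(4*T)) * (Real.exp (-(u-1/2)^2/T) * u ^ p) - u ^ p)
        (fun u : ℝ => (Real.exp ((u - u^2)/T) - 1) * u ^ p) (Set.Ioi (1/8)) := by
      intro u _
      have h1 : Real.exp ((u - u^2)/T) = Real.exp (1/(4*T)) * Real.exp (-(u-1/2)^2/T) := by
        rw [← Real.exp_add]
        congr 1
        field_simp
        ring
      simp only [h1]
      ring
    have hFIoi : IntegrableOn (fun u : ℝ => (Real.exp ((u - u^2)/T) - 1) * u ^ p)
        (Set.Ioi (1/8)) :=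
      IntegrableOn.congr_fun ((hMint.const_mul _).sub hCint) hEqOn measurableSet_Ioi
    have hFIoc : IntegrableOn (fun u : ℝ => (Real.exp ((u - u^2)/T) - 1) * u ^ p)
        (Set.Ioc 0 (1/8)) := by
      refine Integrable.mono' (hKint.const_mul (Real.exp (1/(8*T))/T))
        (meas2 T p).aestronglyMeasurable ?_
      exact (ae_restrict_iff' measurableSet_Ioc).mpr
        (Eventually.of_forall (hFIocBound T hT))
    have hsplit : (∫ u in Set.Ioi (0:ℝ), (Real.exp ((u - u^2)/T) - 1) * u ^ p)
        = E T + ∫ u in Set.Ioi (1/8:ℝ), (Real.exp ((u - u^2)/T) - 1) * u ^ p := by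
      rw [hEdef, ← setIntegral_union (Set.Ioc_disjoint_Ioi le_rfl) measurableSet_Ioi
        hFIoc hFIoi, Set.Ioc_union_Ioi_eq_Ioi (by norm_num : (0:ℝ) ≤ 1/8)]
    have hIoival : (∫ u in Set.Ioi (1/8:ℝ), (Real.exp ((u - u^2)/T) - 1) * u ^ p)
        = Real.exp (1/(4*T)) * M T - C := by
      rw [← setIntegral_congr_fun measurableSet_Ioi hEqOn,
        integral_sub (hMint.const_mul _) hCint, integral_const_mul]
    rw [hsplit, hIoival]
    field_simp
    ring
  have tendE : Tendsto (fun T : ℝ => E T / (Real.sqrt T * Real.exp (1/(4*T))))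
      (nhdsWithin 0 (Set.Ioi 0)) (nhds 0) := by
    apply squeeze_zero_norm' (a := fun T : ℝ =>
      K * ((1/T) ^ ((3:ℝ)/2) * Real.exp (-(1/8) * (1/T))))
    · filter_upwards [self_mem_nhdsWithin] with T hT
      have hT' : (0:ℝ) < T := hT
      have hsT : 0 < Real.sqrt T := Real.sqrt_pos.mpr hT'
      have heT : 0 < Real.exp (1/(4*T)) := Real.exp_pos _
      have hden : ‖Real.sqrt T * Real.exp (1/(4*T))‖ = Real.sqrt T * Real.exp (1/(4*T)) := by
        rw [norm_eq_abs]; exact abs_of_pos (by positivity)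
      rw [norm_div, hden, ← bridge1 T hT' K]
      gcongr
      exact hEbound T hT
    · have := (inv_tail (3/2) (1/8) (by norm_num)).const_mul K
      simpa using this
  have tendC : Tendsto (fun T : ℝ => C / (Real.sqrt T * Real.exp (1/(4*T))))
      (nhdsWithin 0 (Set.Ioi 0)) (nhds 0) := by
    have h := (inv_tail (1/2) (1/4) (by norm_num)).const_mul C
    rw [mul_zero] at h
    refine Tendsto.congr' ?_ h
    filter_upwards [self_mem_nhdsWithin] with T hT
    exact (bridge2 T hT C).symm
  have final := (M_asymp p hp0).add (tendE.sub tendC)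
  rw [sub_zero, add_zero] at final
  refine Tendsto.congr' ?_ final
  filter_upwards [self_mem_nhdsWithin] with T hT
  exact (main T hT).symm

/-- Low-temperature asymptotics for the Mie potential with `n = 2m`, `m > 3`, `σ > 0`:
`B(T) ∼ -2^{2+3/m} (π^{3/2} σ³/m) √T e^{1/(4T)}` as `T → 0⁺`. -/
theorem second_virial_low_temperature_n_eq_two_m (m σ : ℝ) (hm : 3 < m) (hσ : 0 < σ)
    (B : ℝ → ℝ)
    (hB : ∀ T : ℝ, B T = -2 * π * ∫ r in Set.Ioi (0 : ℝ),
        (Real.exp (-(1 / T) * ((σ / r) ^ (2 * m) - (σ / r) ^ m)) - 1) * r ^ 2) :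
    Tendsto (fun T : ℝ => B T /
        (-(2 : ℝ) ^ (2 + 3 / m) * (π ^ ((3 : ℝ) / 2) * σ ^ 3 / m) * Real.sqrt T *
          Real.exp (1 / (4 * T))))
      (nhdsWithin 0 (Set.Ioi 0)) (nhds 1) := by
  have hm0 : (0:ℝ) < m := by linarith
  have hπ : (0:ℝ) < π := pi_pos
  have h2 : ((1:ℝ)/2) ^ (-(1+3/m)) = (2:ℝ) ^ ((1:ℝ)+3/m) := by
    rw [one_div, Real.inv_rpow (by norm_num), ← Real.rpow_neg (by norm_num), neg_neg]
  have hJ := J_asymp m hm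
  rw [h2] at hJ
  set L : ℝ := Real.sqrt π * (2:ℝ) ^ ((1:ℝ)+3/m) with hLdef
  have hsqπ : 0 < Real.sqrt π := Real.sqrt_pos.mpr hπ
  have hL : L ≠ 0 := by positivity
  have final := hJ.mul_const (1/L)
  rw [mul_one_div, div_self hL] at final
  refine Tendsto.congr' ?_ final
  filter_upwards [self_mem_nhdsWithin] with T hT
  have hT' : (0:ℝ) < T := hT
  have hsT : 0 < Real.sqrt T := Real.sqrt_pos.mpr hT'
  have heT : 0 < Real.exp (1/(4*T)) := Real.exp_pos _
  have hπ32 : π ^ ((3:ℝ)/2) = π * Real.sqrt π := by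
    rw [show ((3:ℝ)/2) = 1 + 1/2 by norm_num, Real.rpow_add hπ, Real.rpow_one,
      ← Real.sqrt_eq_rpow]
  have h2m : (2:ℝ) ^ ((2:ℝ) + 3/m) = 2 * (2:ℝ) ^ ((1:ℝ)+3/m) := by
    rw [show ((2:ℝ) + 3/m) = 1 + (1+3/m) by ring, Real.rpow_add (by norm_num),
      Real.rpow_one]
  have h2pos : (0:ℝ) < (2:ℝ) ^ ((1:ℝ)+3/m) := Real.rpow_pos_of_pos (by norm_num) _
  rw [hB T, subst_lemma m σ T hm hσ, hπ32, h2m, hLdef]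
  field_simp
end

section
/- (Lennard-Jones potential, n = 12, m = 6) Let σ > 0 and T > 0. Then B(T) = -2π ∫₀^∞ [exp(-(1/T)((σ/r)^{12} - (σ/r)^6)) - 1] r² dr equals -(πσ³/(6·T^{1/4})) · [ Γ(-1/4) · ₁F₁(-1/4; 1/2; 1/(4T)) + (Γ(1/4)/√T) · ₁F₁(1/4; 3/2; 1/(4T)) ]. -/
open Real MeasureTheory

/-- The Pochhammer symbol (rising factorial) `(a)_k = a(a+1)⋯(a+k-1)`. -/
noncomputable def risingFactorial (a : ℝ) (k : ℕ) : ℝ :=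
  ∏ i ∈ Finset.range k, (a + i)

/-- The Kummer confluent hypergeometric function
`₁F₁(a;b;x) = ∑_{k=0}^∞ ((a)_k/(b)_k) xᵏ/k!`. -/
noncomputable def kummer (a b x : ℝ) : ℝ :=
  ∑' k : ℕ, (risingFactorial a k / risingFactorial b k) * x ^ k / (k.factorial : ℝ)


/-!
Substituting `y = σ¹² / (T r¹²)` turns `B(T)` into
`-(π σ³ / (6 T^{1/4})) ∫₀^∞ (exp (-y + a √y) - 1) y^{-5/4} dy` with `a = 1 / √T`.
Expanding `exp (a √y)` and integrating termwise gives `∑ₖ aᵏ Γ(k/2 - 1/4) / k!`; the term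
`k = 0` is `∫₀^∞ (exp (-y) - 1) y^{s-1} dy = Γ(s)`, Euler's integral continued to `-1 < s < 0`,
and absolute convergence follows from `Γ(x + 1/2) ≤ √x Γ(x)`. The even and odd terms form the
two Kummer series, by `Γ(s + j) = Γ(s) (s)ⱼ`, `(2j)! = 4ʲ j! (1/2)ⱼ`, `(2j+1)! = 4ʲ j! (3/2)ⱼ`.
-/

open Set Filter Topology
open scoped Nat

lemma risingFactorial_succ (a : ℝ) (j : ℕ) :
    risingFactorial a (j + 1) = risingFactorial a j * (a + j) :=
  Finset.prod_range_succ _ _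

lemma risingFactorial_pos {a : ℝ} (ha : 0 < a) (j : ℕ) : 0 < risingFactorial a j :=
  Finset.prod_pos fun _ _ => by positivity

lemma Gamma_add_nat_eq_mul_risingFactorial {a : ℝ} (ha : ∀ i : ℕ, a + i ≠ 0) (j : ℕ) :
    Gamma (a + j) = Gamma a * risingFactorial a j := by
  induction j with
  | zero => simp [risingFactorial]
  | succ j ih =>
    rw [Nat.cast_succ, ← add_assoc, Gamma_add_one (ha j), ih, risingFactorial_succ]
    ring

lemma factorial_two_mul_eq (j : ℕ) :
    ((2 * j)! : ℝ) = 4 ^ j * j ! * risingFactorial (1 / 2) j := by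
  induction j with
  | zero => simp [risingFactorial]
  | succ j ih =>
    rw [show 2 * (j + 1) = 2 * j + 1 + 1 by ring, Nat.factorial_succ, Nat.factorial_succ,
      Nat.factorial_succ, risingFactorial_succ]
    push_cast
    rw [ih]
    ring

lemma factorial_two_mul_add_one_eq (j : ℕ) :
    ((2 * j + 1)! : ℝ) = 4 ^ j * j ! * risingFactorial (3 / 2) j := by
  induction j with
  | zero => simp [risingFactorial]
  | succ j ih =>
    rw [show 2 * (j + 1) + 1 = 2 * j + 1 + 1 + 1 by ring, Nat.factorial_succ, Nat.factorial_succ,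
      Nat.factorial_succ j, risingFactorial_succ]
    push_cast
    rw [ih]
    ring

-- log-convexity of `Γ` at the midpoint of `x` and `x + 1`
lemma Gamma_add_half_le {x : ℝ} (hx : 0 < x) : Gamma (x + 1 / 2) ≤ √x * Gamma x := by
  have hΓ := Gamma_pos_of_pos hx
  calc Gamma (x + 1 / 2) = Gamma (1 / 2 * x + 1 / 2 * (x + 1)) := by ring_nf
    _ ≤ Gamma x ^ (1 / 2 : ℝ) * Gamma (x + 1) ^ (1 / 2 : ℝ) :=
      Gamma_mul_add_mul_le_rpow_Gamma_mul_rpow_Gamma hx (by linarith) (by norm_num)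
        (by norm_num) (by norm_num)
    _ = √x * Gamma x := by
      rw [Gamma_add_one hx.ne', mul_rpow hx.le hΓ.le, sqrt_eq_rpow, mul_left_comm,
        ← rpow_add hΓ]
      norm_num

lemma summable_pow_mul_Gamma_div_factorial (a s : ℝ) :
    Summable fun k : ℕ => a ^ k * Gamma (s + k / 2) / k ! := by
  refine summable_of_ratio_norm_eventually_le (r := 1 / 2) (by norm_num) ?_
  have hlarge : ∀ᶠ k : ℕ in atTop, 2 * |s| + 1 ≤ (k : ℝ) ∧ 4 * a ^ 2 ≤ (k : ℝ) :=
    tendsto_natCast_atTop_atTop.eventually ((eventually_ge_atTop _).and (eventually_ge_atTop _))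
  filter_upwards [hlarge] with k ⟨hks, hka⟩
  set x := s + (k : ℝ) / 2 with hx_def
  have hx : 0 < x := by linarith [neg_abs_le s]
  have hΓ := Gamma_pos_of_pos hx
  have hΓ' := Gamma_pos_of_pos (by linarith : 0 < x + 1 / 2)
  -- `2|a|√x ≤ √(k+1) √(k+1)`, since `4a² ≤ k + 1` and `x ≤ k + 1`
  have hratio : |a| * √x ≤ 1 / 2 * (k + 1) := by
    have h1 : 2 * |a| ≤ √(k + 1) := by
      rw [show 2 * |a| = √((2 * |a|) ^ 2) from (sqrt_sq (by positivity)).symm]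
      exact sqrt_le_sqrt (by nlinarith [sq_abs a])
    have h2 : √x ≤ √(k + 1) := sqrt_le_sqrt (by linarith [le_abs_self s])
    nlinarith [mul_self_sqrt (by positivity : (0 : ℝ) ≤ k + 1), sqrt_nonneg x, abs_nonneg a]
  have hshift : s + ((k + 1 : ℕ) : ℝ) / 2 = x + 1 / 2 := by push_cast; ring
  simp only [hshift, norm_div, norm_mul, norm_pow, norm_eq_abs, abs_of_pos hΓ, abs_of_pos hΓ',
    Nat.abs_cast]
  calc |a| ^ (k + 1) * Gamma (x + 1 / 2) / ((k + 1)! : ℝ)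
      ≤ |a| ^ (k + 1) * (√x * Gamma x) / ((k + 1)! : ℝ) := by gcongr; exact Gamma_add_half_le hx
    _ = (|a| * √x) / (k + 1) * (|a| ^ k * Gamma x / k !) := by
      rw [Nat.factorial_succ]; push_cast; field_simp; ring
    _ ≤ 1 / 2 * (|a| ^ k * Gamma x / k !) :=
      mul_le_mul_of_nonneg_right ((div_le_iff₀ (by positivity)).2 hratio) (by positivity)

lemma tsum_pow_mul_Gamma_div_factorial {s : ℝ} (hs : -1 / 2 < s) (hs0 : s ≠ 0) (a : ℝ) :
    ∑' k : ℕ, a ^ k * Gamma (s + k / 2) / k ! =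
      Gamma s * kummer s (1 / 2) (a ^ 2 / 4) +
        a * Gamma (s + 1 / 2) * kummer (s + 1 / 2) (3 / 2) (a ^ 2 / 4) := by
  have hsum := summable_pow_mul_Gamma_div_factorial a s
  have hs_nat : ∀ i : ℕ, s + i ≠ 0 := by
    rintro (_ | i)
    · simpa using hs0
    · have : (0 : ℝ) ≤ i := i.cast_nonneg
      push_cast; linarith
  have hs_half : ∀ i : ℕ, s + 1 / 2 + i ≠ 0 := fun i => by
    have : (0 : ℝ) ≤ i := i.cast_nonneg
    linarith
  rw [← tsum_even_add_odd (f := fun k : ℕ => a ^ k * Gamma (s + k / 2) / k !)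
    (hsum.comp_injective (mul_right_injective₀ two_ne_zero))
    (hsum.comp_injective ((add_left_injective 1).comp (mul_right_injective₀ two_ne_zero))),
    kummer, kummer, ← tsum_mul_left, ← tsum_mul_left]
  have ha2 (j : ℕ) : a ^ (2 * j) = 4 ^ j * (a ^ 2 / 4) ^ j := by
    rw [pow_mul, ← mul_pow]; ring_nf
  congr 1 <;> refine tsum_congr fun j => ?_
  · rw [show s + ((2 * j : ℕ) : ℝ) / 2 = s + j by push_cast; ring,
      Gamma_add_nat_eq_mul_risingFactorial hs_nat, factorial_two_mul_eq, ha2]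
    have := (risingFactorial_pos (by norm_num : (0 : ℝ) < 1 / 2) j).ne'
    field_simp
  · rw [show s + ((2 * j + 1 : ℕ) : ℝ) / 2 = s + 1 / 2 + j by push_cast; ring,
      Gamma_add_nat_eq_mul_risingFactorial hs_half, factorial_two_mul_add_one_eq, pow_succ, ha2]
    have := (risingFactorial_pos (by norm_num : (0 : ℝ) < 3 / 2) j).ne'
    field_simp

lemma abs_exp_neg_sub_one_le_s12 {y : ℝ} (hy : 0 ≤ y) : |exp (-y) - 1| ≤ min y 1 := by
  rw [abs_of_nonpos (by simpa using hy)]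
  exact le_min (by linarith [add_one_le_exp (-y)]) (by linarith [exp_pos (-y)])

lemma integrableOn_exp_neg_sub_one_mul_rpow {s : ℝ} (hs : -1 < s) (hs0 : s < 0) :
    IntegrableOn (fun y : ℝ => (exp (-y) - 1) * y ^ (s - 1)) (Ioi 0) := by
  have hcont : ContinuousOn (fun y : ℝ => (exp (-y) - 1) * y ^ (s - 1)) (Ioi 0) :=
    (by fun_prop : Continuous fun y : ℝ => exp (-y) - 1).continuousOn.mul
      (continuousOn_id.rpow_const fun y hy => Or.inl (ne_of_gt hy))
  have hbound {y : ℝ} (hy : 0 < y) :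
      ‖(exp (-y) - 1) * y ^ (s - 1)‖ ≤ min y 1 * y ^ (s - 1) := by
    rw [norm_mul, norm_eq_abs, norm_eq_abs, abs_of_pos (rpow_pos_of_pos hy _)]
    exact mul_le_mul_of_nonneg_right (abs_exp_neg_sub_one_le_s12 hy.le) (rpow_pos_of_pos hy _).le
  rw [← Ioc_union_Ioi_eq_Ioi zero_le_one]
  refine IntegrableOn.union ?_ ?_
  · refine Integrable.mono' (intervalIntegral.intervalIntegrable_rpow' hs).1
      ((hcont.mono Ioc_subset_Ioi_self).aestronglyMeasurable measurableSet_Ioc) ?_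
    refine (ae_restrict_iff' measurableSet_Ioc).2 (ae_of_all _ fun y ⟨hy, _⟩ => ?_)
    calc _ ≤ min y 1 * y ^ (s - 1) := hbound hy
      _ ≤ y * y ^ (s - 1) := by gcongr; exact min_le_left _ _
      _ = y ^ (1 + (s - 1)) := by rw [rpow_add hy, rpow_one]
      _ = y ^ s := by ring_nf
  · refine Integrable.mono' (integrableOn_Ioi_rpow_of_lt (by linarith : s - 1 < -1) one_pos)
      ((hcont.mono (Ioi_subset_Ioi zero_le_one)).aestronglyMeasurable measurableSet_Ioi) ?_
    refine (ae_restrict_iff' measurableSet_Ioi).2 (ae_of_all _ fun y (hy : 1 < y) => ?_)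
    calc _ ≤ min y 1 * y ^ (s - 1) := hbound (by linarith)
      _ ≤ 1 * y ^ (s - 1) := by gcongr; exact min_le_right _ _
      _ = y ^ (s - 1) := one_mul _

-- integration by parts against `d(y ^ s / s)` reduces to `Γ(s + 1) / s`
lemma integral_exp_neg_sub_one_mul_rpow {s : ℝ} (hs : -1 < s) (hs0 : s < 0) :
    ∫ y in Ioi 0, (exp (-y) - 1) * y ^ (s - 1) = Gamma s := by
  have hu (y : ℝ) (_ : y ∈ Ioi (0 : ℝ)) :
      HasDerivAt (fun y => exp (-y) - 1) (-exp (-y)) y := by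
    simpa using ((hasDerivAt_neg y).exp).sub_const 1
  have hv (y : ℝ) (hy : y ∈ Ioi (0 : ℝ)) :
      HasDerivAt (fun y => y ^ s / s) (y ^ (s - 1)) y := by
    simpa [mul_div_cancel_left₀ _ hs0.ne] using
      (hasDerivAt_rpow_const (p := s) (Or.inl (ne_of_gt hy))).div_const s
  have hGamma : IntegrableOn (fun y : ℝ => exp (-y) * y ^ s) (Ioi 0) := by
    simpa using GammaIntegral_convergent (by linarith : 0 < s + 1)
  have hu'v : IntegrableOn (fun y : ℝ => -exp (-y) * (y ^ s / s)) (Ioi 0) := by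
    refine IntegrableOn.congr_fun (hGamma.neg.div_const s) (fun y _ => ?_) measurableSet_Ioi
    simp only [Pi.neg_apply]; ring
  have h_zero : Tendsto (fun y : ℝ => (exp (-y) - 1) * (y ^ s / s)) (𝓝[>] 0) (𝓝 0) := by
    have hlim : Tendsto (fun y : ℝ => y ^ (s + 1) / -s) (𝓝[>] 0) (𝓝 0) := by
      have := ((continuousAt_rpow_const 0 (s + 1) (Or.inr (by linarith))).tendsto.div_const
        (-s)).mono_left (nhdsWithin_le_nhds (s := Ioi 0))
      rwa [zero_rpow (by linarith), zero_div] at this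
    refine squeeze_zero_norm' ?_ hlim
    filter_upwards [self_mem_nhdsWithin] with y (hy : 0 < y)
    calc ‖(exp (-y) - 1) * (y ^ s / s)‖ = |exp (-y) - 1| * (y ^ s / -s) := by
          rw [norm_mul, norm_div, norm_eq_abs, norm_eq_abs, norm_eq_abs,
            abs_of_pos (rpow_pos_of_pos hy _), abs_of_neg hs0]
      _ ≤ y * (y ^ s / -s) := by
          gcongr
          · exact div_nonneg (rpow_pos_of_pos hy s).le (by linarith)
          · exact (abs_exp_neg_sub_one_le_s12 hy.le).trans (min_le_left _ _)
      _ = y ^ (s + 1) / -s := by rw [rpow_add hy, rpow_one]; ring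
  have h_infty : Tendsto (fun y : ℝ => (exp (-y) - 1) * (y ^ s / s)) atTop (𝓝 0) := by
    have := (tendsto_exp_neg_atTop_nhds_zero.sub_const 1).mul
      ((tendsto_rpow_neg_atTop (neg_pos.2 hs0)).div_const s)
    simpa using this
  rw [integral_Ioi_mul_deriv_eq_deriv_mul hu hv (integrableOn_exp_neg_sub_one_mul_rpow hs hs0) hu'v
    h_zero h_infty]
  have hΓ := Gamma_eq_integral (by linarith : 0 < s + 1)
  rw [add_sub_cancel_right, Gamma_add_one hs0.ne] at hΓ
  simp only [neg_mul, integral_neg, mul_div_assoc', integral_div]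
  rw [← hΓ]
  field_simp [hs0.ne]
  ring

-- the `- 1` of `exp (-y + a √y) - 1` is carried by the term `k = 0`
noncomputable def expansionTerm (a s : ℝ) (k : ℕ) (y : ℝ) : ℝ :=
  ((a * √y) ^ k / k ! * exp (-y) - if k = 0 then 1 else 0) * y ^ (s - 1)

lemma hasSum_expansionTerm (a s y : ℝ) :
    HasSum (fun k => expansionTerm a s k y) ((exp (-y + a * √y) - 1) * y ^ (s - 1)) := by
  have hexp := (NormedSpace.expSeries_div_hasSum_exp (a * √y)).mul_right (exp (-y))
  rw [← exp_eq_exp_ℝ, ← exp_add, add_comm] at hexp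
  exact (hexp.sub (hasSum_ite_eq 0 1)).mul_right _

lemma expansionTerm_zero (a s y : ℝ) :
    expansionTerm a s 0 y = (exp (-y) - 1) * y ^ (s - 1) := by
  simp [expansionTerm]

lemma expansionTerm_of_ne_zero (a s : ℝ) {k : ℕ} (hk : k ≠ 0) {y : ℝ} (hy : 0 < y) :
    expansionTerm a s k y = a ^ k / k ! * (exp (-y) * y ^ (s + k / 2 - 1)) := by
  have hsqrt : √y ^ k * y ^ (s - 1) = y ^ (s + k / 2 - 1) := by
    rw [sqrt_eq_rpow, ← rpow_natCast, ← rpow_mul hy.le, ← rpow_add hy]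
    ring_nf
  simp only [expansionTerm, hk, if_false, sub_zero, mul_pow]
  rw [← hsqrt]
  ring

lemma integrableOn_expansionTerm (a : ℝ) {s : ℝ} (hs : -1 / 2 < s) (hs0 : s < 0) (k : ℕ) :
    IntegrableOn (expansionTerm a s k) (Ioi 0) := by
  rcases eq_or_ne k 0 with rfl | hk
  · rw [show expansionTerm a s 0 = _ from funext (expansionTerm_zero a s)]
    exact integrableOn_exp_neg_sub_one_mul_rpow (by linarith) hs0
  · have hpos : 0 < s + k / 2 := by
      have : (1 : ℝ) ≤ k := Nat.one_le_cast.2 (Nat.pos_of_ne_zero hk)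
      linarith
    exact IntegrableOn.congr_fun ((GammaIntegral_convergent hpos).const_mul _)
      (fun y hy => (expansionTerm_of_ne_zero a s hk hy).symm) measurableSet_Ioi

lemma integral_expansionTerm (a : ℝ) {s : ℝ} (hs : -1 / 2 < s) (hs0 : s < 0) (k : ℕ) :
    ∫ y in Ioi 0, expansionTerm a s k y = a ^ k * Gamma (s + k / 2) / k ! := by
  rcases eq_or_ne k 0 with rfl | hk
  · simpa only [expansionTerm_zero, pow_zero, one_mul, CharP.cast_eq_zero, zero_div, add_zero,
      Nat.factorial_zero, Nat.cast_one, div_one] using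
      integral_exp_neg_sub_one_mul_rpow (by linarith) hs0
  · have hpos : 0 < s + k / 2 := by
      have : (1 : ℝ) ≤ k := Nat.one_le_cast.2 (Nat.pos_of_ne_zero hk)
      linarith
    rw [setIntegral_congr_fun measurableSet_Ioi fun y hy => expansionTerm_of_ne_zero a s hk hy,
      integral_const_mul, ← Gamma_eq_integral hpos]
    ring

-- each term has constant sign on `(0, ∞)`
lemma integral_norm_expansionTerm (a s : ℝ) (k : ℕ) :
    ∫ y in Ioi 0, ‖expansionTerm a s k y‖ = |∫ y in Ioi 0, expansionTerm a s k y| := by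
  rcases eq_or_ne k 0 with rfl | hk
  · have hnonpos : ∀ y ∈ Ioi (0 : ℝ), expansionTerm a s 0 y ≤ 0 := fun y (hy : 0 < y) => by
      rw [expansionTerm_zero]
      exact mul_nonpos_of_nonpos_of_nonneg (by simpa using hy.le) (rpow_pos_of_pos hy _).le
    rw [abs_of_nonpos (setIntegral_nonpos measurableSet_Ioi hnonpos), ← integral_neg]
    exact setIntegral_congr_fun measurableSet_Ioi fun y hy => by
      rw [norm_eq_abs, abs_of_nonpos (hnonpos y hy)]
  · have hnorm : ∀ y ∈ Ioi (0 : ℝ), ‖expansionTerm a s k y‖ =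
        |a ^ k / k !| * (exp (-y) * y ^ (s + k / 2 - 1)) := fun y (hy : 0 < y) => by
      rw [expansionTerm_of_ne_zero a s hk hy, norm_mul, norm_eq_abs, norm_eq_abs,
        abs_of_pos (a := exp (-y) * _) (by positivity)]
    rw [setIntegral_congr_fun measurableSet_Ioi hnorm, integral_const_mul,
      setIntegral_congr_fun measurableSet_Ioi fun y hy => expansionTerm_of_ne_zero a s hk hy,
      integral_const_mul, abs_mul, abs_of_nonneg (a := ∫ _ in _, _)]
    exact setIntegral_nonneg measurableSet_Ioi fun y (hy : 0 < y) => by positivity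

-- termwise integration, justified by the absolute convergence of the resulting series
lemma integral_exp_neg_add_mul_sqrt_sub_one_mul_rpow (a : ℝ) {s : ℝ} (hs : -1 / 2 < s)
    (hs0 : s < 0) :
    ∫ y in Ioi 0, (exp (-y + a * √y) - 1) * y ^ (s - 1) =
      ∑' k : ℕ, a ^ k * Gamma (s + k / 2) / k ! := by
  have hsum : Summable fun k => ∫ y in Ioi 0, ‖expansionTerm a s k y‖ := by
    simpa only [integral_norm_expansionTerm a s, integral_expansionTerm a hs hs0] using
      (summable_pow_mul_Gamma_div_factorial a s).abs
  simp_rw [← (hasSum_expansionTerm a s _).tsum_eq,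
    ← integral_tsum_of_summable_integral_norm (integrableOn_expansionTerm a hs hs0) hsum,
    integral_expansionTerm a hs hs0]

-- the substitution `y = c x ^ p`
lemma integral_comp_mul_rpow_mul_rpow_Ioi (g : ℝ → ℝ) {p c : ℝ} (hp : p ≠ 0) (hc : 0 < c)
    (s : ℝ) :
    ∫ x in Ioi 0, g (c * x ^ p) * x ^ (p * s - 1) =
      c ^ (-s) / |p| * ∫ y in Ioi 0, g y * y ^ (s - 1) := by
  have hpow := integral_comp_rpow_Ioi (fun z => g (c * z) * z ^ (s - 1)) hp
  have hscale := integral_comp_mul_left_Ioi (fun y => g y * y ^ (s - 1)) 0 hc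
  rw [mul_zero, smul_eq_mul] at hscale
  have hl : ∫ x in Ioi 0, (|p| * x ^ (p - 1)) • (g (c * x ^ p) * (x ^ p) ^ (s - 1)) =
      |p| * ∫ x in Ioi 0, g (c * x ^ p) * x ^ (p * s - 1) := by
    rw [← integral_const_mul]
    refine setIntegral_congr_fun measurableSet_Ioi fun x (hx : 0 < x) => ?_
    rw [smul_eq_mul, ← rpow_mul hx.le, show p * s - 1 = (p - 1) + p * (s - 1) by ring,
      rpow_add hx]
    ring
  have hr : ∫ z in Ioi 0, g (c * z) * (c * z) ^ (s - 1) =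
      c ^ (s - 1) * ∫ z in Ioi 0, g (c * z) * z ^ (s - 1) := by
    rw [← integral_const_mul]
    refine setIntegral_congr_fun measurableSet_Ioi fun z (hz : 0 < z) => ?_
    rw [mul_rpow hc.le hz.le]
    ring
  rw [hl] at hpow
  rw [hr] at hscale
  have hJ : ∫ z in Ioi 0, g (c * z) * z ^ (s - 1) = c ^ (-s) * ∫ y in Ioi 0, g y * y ^ (s - 1) := by
    apply mul_left_cancel₀ (rpow_pos_of_pos hc (s - 1)).ne'
    rw [hscale, rpow_neg hc.le, rpow_sub_one hc.ne']
    field_simp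
  rw [div_mul_eq_mul_div, ← hJ, ← hpow]
  field_simp [abs_ne_zero.2 hp]

-- in the variable `y = σ¹² / (T r¹²)` the exponent is `-y + √y / √T`
lemma lennardJones_exponent_eq {σ T r : ℝ} (hσ : 0 < σ) (hT : 0 < T) (hr : 0 < r) :
    -(1 / T) * ((σ / r) ^ (12 : ℝ) - (σ / r) ^ (6 : ℝ)) =
      -(σ ^ 12 / T * r ^ (-12 : ℝ)) + (√T)⁻¹ * √(σ ^ 12 / T * r ^ (-12 : ℝ)) := by
  have hw : (σ / r) ^ (12 : ℝ) = ((σ / r) ^ (6 : ℝ)) ^ 2 := by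
    rw [← rpow_natCast, ← rpow_mul (by positivity)]; norm_num
  have hy : σ ^ 12 / T * r ^ (-12 : ℝ) = (σ / r) ^ (12 : ℝ) / T := by
    rw [div_rpow hσ.le hr.le, rpow_neg hr.le]; norm_num; ring
  rw [hy, hw, sqrt_div' _ hT.le, sqrt_sq (by positivity)]
  field_simp
  rw [sq_sqrt hT.le]
  ring

/-- The second virial coefficient for the Lennard-Jones potential (`n = 12`, `m = 6`):
`B(T) = -(πσ³/(6T^{1/4})) [Γ(-1/4) ₁F₁(-1/4;1/2;1/(4T)) + (Γ(1/4)/√T) ₁F₁(1/4;3/2;1/(4T))]`. -/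
theorem second_virial_lennard_jones (σ T : ℝ) (hσ : 0 < σ) (hT : 0 < T) :
    -2 * π * ∫ r in Set.Ioi (0 : ℝ),
        (Real.exp (-(1 / T) * ((σ / r) ^ (12 : ℝ) - (σ / r) ^ (6 : ℝ))) - 1) * r ^ 2
      = -(π * σ ^ 3 / (6 * T ^ ((1 : ℝ) / 4))) *
          (Real.Gamma (-(1 / 4)) * kummer (-(1 / 4)) (1 / 2) (1 / (4 * T)) +
            Real.Gamma (1 / 4) / Real.sqrt T * kummer (1 / 4) (3 / 2) (1 / (4 * T))) := by
  have hc : 0 < σ ^ 12 / T := by positivity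
  have hsubst : ∀ r ∈ Ioi (0 : ℝ),
      (exp (-(1 / T) * ((σ / r) ^ (12 : ℝ) - (σ / r) ^ (6 : ℝ))) - 1) * r ^ 2 =
        (exp (-(σ ^ 12 / T * r ^ (-12 : ℝ)) + (√T)⁻¹ * √(σ ^ 12 / T * r ^ (-12 : ℝ))) - 1) *
          r ^ ((-12 : ℝ) * (-1 / 4) - 1) := fun r (hr : 0 < r) => by
    rw [lennardJones_exponent_eq hσ hT hr]
    norm_num
  rw [setIntegral_congr_fun measurableSet_Ioi hsubst,
    integral_comp_mul_rpow_mul_rpow_Ioi (fun y => exp (-y + (√T)⁻¹ * √y) - 1) (by norm_num) hc,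
    integral_exp_neg_add_mul_sqrt_sub_one_mul_rpow _ (by norm_num) (by norm_num),
    tsum_pow_mul_Gamma_div_factorial (by norm_num) (by norm_num)]
  have hc4 : (σ ^ 12 / T) ^ (-(-1 / 4 : ℝ)) = σ ^ 3 / T ^ (1 / 4 : ℝ) := by
    rw [div_rpow (by positivity) hT.le, ← rpow_natCast, ← rpow_mul hσ.le]
    norm_num
  have hT4 : (√T)⁻¹ ^ 2 / 4 = 1 / (4 * T) := by
    rw [inv_pow, sq_sqrt hT.le]; ring
  rw [hc4, hT4]
  norm_num
  ring
end

section
/- (Mie potential, n = 9, m = 6, low-temperature asymptotics) Let σ > 0 and let B(T) = -2π ∫₀^∞ [exp(-(1/T)((σ/r)^9 - (σ/r)^6)) - 1] r² dr. Then, as T → 0⁺, the ratio B(T) / ( -(3π^{3/2}/2) σ³ √T · exp(4/(27T)) ) tends to 1; that is, B(T) is asymptotic to -(3π^{3/2}/2) σ³ √T · e^{4/(27T)} as T → 0⁺. -/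
open Real Filter MeasureTheory

namespace MieAux

open Set Topology


noncomputable def q : ℝ := (3/2 : ℝ) ^ ((1:ℝ)/3)

lemma q_pos : 0 < q := rpow_pos_of_pos (by norm_num) _

lemma q_cube : q ^ 3 = 3/2 := by
  rw [q, ← rpow_natCast ((3/2:ℝ) ^ ((1:ℝ)/3)) 3, ← rpow_mul (by norm_num)]
  norm_num

lemma q_lt_two : q < 2 := by
  have := q_cube
  nlinarith [q_pos, sq_nonneg (q-2), sq_nonneg q]

lemma one_lt_q : 1 < q := by
  have := q_cube
  nlinarith [q_pos, sq_nonneg (q-1), sq_nonneg q]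

noncomputable def v (s : ℝ) : ℝ := (s⁻¹)^9 - (s⁻¹)^6

noncomputable def g (s : ℝ) : ℝ := 4*(s^2+s*q+q^2)^2*(s^3+3)/(27*s^9)

lemma key {s : ℝ} (hs : s ≠ 0) : v s + 4/27 = (s-q)^2 * g s := by
  have h3 := q_cube
  rw [v, g]
  field_simp
  linear_combination (108*s^15*(s^3+3)*(2*s^3-q^3-3/2) + (-4*s^3 + 324*s^15 + 108*s^18 - 12)*q^3 + (18*s^3 + 8*s^6 + 486*s^15 - 486*s^18 - 216*s^21 - 18)) * h3

lemma measurable_v : Measurable v :=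
  (measurable_inv.pow_const 9).sub (measurable_inv.pow_const 6)

lemma g_nonneg {s : ℝ} (hs : 0 < s) : 0 ≤ g s := by
  have h9 : (0:ℝ) < s^9 := pow_pos hs 9
  have h3 : (0:ℝ) < s^3 := pow_pos hs 3
  exact div_nonneg (by nlinarith [sq_nonneg (s^2+s*q+q^2)]) (by linarith)

lemma vplus_nonneg {s : ℝ} (hs : 0 < s) : 0 ≤ v s + 4/27 := by
  rw [key hs.ne']
  exact mul_nonneg (sq_nonneg _) (g_nonneg hs)

lemma g_lower {s : ℝ} (h1 : 0 < s) (h2 : s ≤ 2) : q^4/1152 ≤ g s := by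
  have hq := q_pos
  have h9 : (0:ℝ) < s^9 := pow_pos h1 9
  rw [g, le_div_iff₀ (by linarith)]
  have hX : q^2 ≤ s^2+s*q+q^2 := by nlinarith
  have hX2 : (q^2)^2 ≤ (s^2+s*q+q^2)^2 := by nlinarith [sq_nonneg q]
  have hs9 : s^9 ≤ 512 := by
    calc s^9 ≤ 2^9 := pow_le_pow_left₀ h1.le h2 9
    _ = 512 := by norm_num
  have h3 : (0:ℝ) < s^3 := pow_pos h1 3
  nlinarith [pow_pos hq 4, sq_nonneg (s^2+s*q+q^2)]

lemma g_at_q : g q = 4/q^2 := by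
  have h3 := q_cube
  have hq := q_pos
  rw [g]
  field_simp
  linear_combination (-18) * h3

lemma g_contAt : ContinuousAt g q := by
  apply ContinuousAt.div
  · fun_prop
  · fun_prop
  · have := q_pos
    positivity

lemma v_nonpos {s : ℝ} (hs : 1 ≤ s) : v s ≤ 0 := by
  have h0 : 0 ≤ s⁻¹ := inv_nonneg.mpr (by linarith)
  have h1 : s⁻¹ ≤ 1 := inv_le_one_of_one_le₀ hs
  have := pow_le_pow_of_le_one h0 h1 (by norm_num : 6 ≤ 9)
  rw [v]; linarith

lemma neg_v_le {s : ℝ} (hs : 1 ≤ s) : -v s ≤ (s⁻¹)^6 := by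
  have h0 : 0 ≤ s⁻¹ := inv_nonneg.mpr (by linarith)
  have : 0 ≤ (s⁻¹)^9 := pow_nonneg h0 9
  rw [v]; linarith

lemma exp_ge_quarter_sq {z : ℝ} (hz : 0 ≤ z) : z^2/4 ≤ exp z := by
  have h := add_one_le_exp (z/2)
  have h2 : exp (z/2) * exp (z/2) = exp z := by
    rw [← Real.exp_add]; ring_nf
  nlinarith [Real.exp_pos (z/2)]

lemma exp_sub_one_le {x : ℝ} (hx : 0 ≤ x) : exp x - 1 ≤ x * exp x := by
  have hpos := Real.exp_pos x
  have h := add_one_le_exp (-x)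
  rw [Real.exp_neg] at h
  have h2 := mul_le_mul_of_nonneg_right h hpos.le
  rw [inv_mul_cancel₀ hpos.ne'] at h2
  nlinarith

noncomputable def f (T s : ℝ) : ℝ := (exp (-(1/T) * v s) - 1) * s^2

noncomputable def mainF (T s : ℝ) : ℝ := exp (-(v s + 4/27)/T) * s^2

noncomputable def Phi (T : ℝ) : ℝ := ∫ s in Ioc (0:ℝ) 2, mainF T s

noncomputable def K : ℝ := ∫ s in Ioi (2:ℝ), s ^ (-4:ℝ)

lemma measurable_mainF (T : ℝ) : Measurable (mainF T) :=
  (Real.measurable_exp.comp (((measurable_v.add_const _).neg).div_const T)).mul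
    (measurable_id.pow_const 2)

lemma measurable_f (T : ℝ) : Measurable (f T) :=
  ((Real.measurable_exp.comp ((measurable_v.const_mul _))).sub measurable_const).mul
    (measurable_id.pow_const 2)

lemma mainF_nonneg (T s : ℝ) : 0 ≤ mainF T s := by
  rw [mainF]; positivity

lemma integrable_mainF {T : ℝ} (hT : 0 < T) : IntegrableOn (mainF T) (Ioc 0 2) volume := by
  apply Integrable.mono' (integrable_const (4:ℝ)) ((measurable_mainF T).aestronglyMeasurable)
  rw [ae_restrict_iff' measurableSet_Ioc]
  filter_upwards with s hs
  rw [Real.norm_eq_abs, abs_of_nonneg (mainF_nonneg T s), mainF]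
  have h1 : exp (-(v s + 4/27)/T) ≤ 1 := by
    rw [Real.exp_le_one_iff]
    have := vplus_nonneg hs.1
    have h2 : 0 ≤ (v s + 4/27)/T := by positivity
    have h3 : -(v s + 4/27)/T = -((v s + 4/27)/T) := by ring
    linarith [h3.le, h3.ge]
  have h2 : s^2 ≤ 4 := by nlinarith [hs.1, hs.2]
  nlinarith [mainF_nonneg T s, Real.exp_pos (-(v s + 4/27)/T), sq_nonneg s]

lemma f_eq {T : ℝ} (hT : 0 < T) (s : ℝ) :
    f T s = exp (4/(27*T)) * mainF T s - s^2 := by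
  rw [f, mainF, ← mul_assoc, ← Real.exp_add]
  have : 4/(27*T) + -(v s + 4/27)/T = -(1/T) * v s := by
    field_simp; ring
  rw [this]; ring

lemma integrable_f_Ioc {T : ℝ} (hT : 0 < T) : IntegrableOn (f T) (Ioc 0 2) volume := by
  have : f T = fun s => exp (4/(27*T)) * mainF T s - s^2 := funext (f_eq hT)
  rw [this]
  exact ((integrable_mainF hT).const_mul _).sub
    ((continuous_pow 2).integrableOn_Ioc)

lemma integral_f_Ioc {T : ℝ} (hT : 0 < T) :
    ∫ s in Ioc (0:ℝ) 2, f T s = exp (4/(27*T)) * Phi T - 8/3 := by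
  have h1 : ∫ s in Ioc (0:ℝ) 2, f T s
      = ∫ s in Ioc (0:ℝ) 2, (exp (4/(27*T)) * mainF T s - s^2) := by
    apply setIntegral_congr_fun measurableSet_Ioc
    intro s _; exact f_eq hT s
  rw [h1, integral_sub (((integrable_mainF hT).const_mul _)) ((continuous_pow 2).integrableOn_Ioc),
    integral_const_mul]
  have h2 : ∫ s in Ioc (0:ℝ) 2, s^2 = 8/3 := by
    rw [← intervalIntegral.integral_of_le (by norm_num : (0:ℝ) ≤ 2)]
    simp [integral_pow]
    norm_num
  rw [h2, Phi]

lemma f_nonneg_tail {T : ℝ} (hT : 0 < T) {s : ℝ} (hs : 1 ≤ s) : 0 ≤ f T s := by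
  rw [f]
  have h1 : 0 ≤ -(1/T) * v s := by
    have := v_nonpos hs
    have h2 : (0:ℝ) ≤ 1/T := by positivity
    nlinarith
  have : (1:ℝ) ≤ exp (-(1/T) * v s) := Real.one_le_exp h1
  nlinarith [sq_nonneg s]

lemma f_le_tail {T : ℝ} (hT : 0 < T) {s : ℝ} (hs : 2 < s) :
    f T s ≤ ((1/T) * exp (1/(64*T))) * s ^ (-4:ℝ) := by
  have hs0 : (0:ℝ) < s := by linarith
  have hs1 : (1:ℝ) ≤ s := by linarith
  set x := -(1/T) * v s with hx
  have hx0 : 0 ≤ x := by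
    have := v_nonpos hs1
    have h2 : (0:ℝ) ≤ 1/T := by positivity
    nlinarith
  have e4 : x ≤ (1/T) * (s⁻¹)^6 := by
    have := neg_v_le hs1
    have h2 : (0:ℝ) ≤ 1/T := by positivity
    calc x = (1/T) * (-v s) := by rw [hx]; ring
    _ ≤ (1/T) * (s⁻¹)^6 := mul_le_mul_of_nonneg_left this h2
  have hinv : s⁻¹ ≤ 2⁻¹ := by
    apply inv_anti₀ (by norm_num) hs.le
  have hinv0 : (0:ℝ) ≤ s⁻¹ := by positivity
  have e2 : x ≤ 1/(64*T) := by
    have h6 : (s⁻¹)^6 ≤ (2⁻¹:ℝ)^6 := pow_le_pow_left₀ hinv0 hinv 6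
    have h2 : (0:ℝ) ≤ 1/T := by positivity
    calc x ≤ (1/T) * (s⁻¹)^6 := e4
    _ ≤ (1/T) * (2⁻¹:ℝ)^6 := mul_le_mul_of_nonneg_left h6 h2
    _ = 1/(64*T) := by field_simp; ring
  have e3 : exp x ≤ exp (1/(64*T)) := exp_le_exp.mpr e2
  have e1 : exp x - 1 ≤ x * exp x := exp_sub_one_le hx0
  have hs4 : s ^ (-4:ℝ) = (s⁻¹)^6 * s^2 := by
    rw [show (-4:ℝ) = -((4:ℕ):ℝ) by norm_num, rpow_neg hs0.le, rpow_natCast]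
    field_simp
  calc f T s = (exp x - 1) * s^2 := rfl
  _ ≤ (x * exp x) * s^2 := mul_le_mul_of_nonneg_right e1 (sq_nonneg s)
  _ ≤ (((1/T)*(s⁻¹)^6) * exp (1/(64*T))) * s^2 := by
      apply mul_le_mul_of_nonneg_right _ (sq_nonneg s)
      exact mul_le_mul e4 e3 (exp_pos x).le (by positivity)
  _ = ((1/T) * exp (1/(64*T))) * ((s⁻¹)^6 * s^2) := by ring
  _ = ((1/T) * exp (1/(64*T))) * s^(-4:ℝ) := by rw [hs4]

lemma integrable_f_Ioi {T : ℝ} (hT : 0 < T) : IntegrableOn (f T) (Ioi 2) volume := by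
  apply Integrable.mono'
    (((integrableOn_Ioi_rpow_of_lt (by norm_num : (-4:ℝ) < -1) (by norm_num : (0:ℝ) < 2)).const_mul
      ((1/T) * exp (1/(64*T)))))
    ((measurable_f T).aestronglyMeasurable)
  rw [ae_restrict_iff' measurableSet_Ioi]
  filter_upwards with s hs
  rw [Real.norm_eq_abs, abs_of_nonneg (f_nonneg_tail hT (by simpa using le_of_lt (lt_trans one_lt_two hs)))]
  exact f_le_tail hT hs

lemma K_nonneg : 0 ≤ K := by
  apply setIntegral_nonneg measurableSet_Ioi
  intro s hs
  exact rpow_nonneg (le_of_lt (lt_trans two_pos hs)) _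

lemma tail_nonneg {T : ℝ} (hT : 0 < T) : 0 ≤ ∫ s in Ioi (2:ℝ), f T s := by
  apply setIntegral_nonneg measurableSet_Ioi
  intro s hs
  exact f_nonneg_tail hT (le_of_lt (lt_trans one_lt_two hs))

lemma tail_le {T : ℝ} (hT : 0 < T) :
    ∫ s in Ioi (2:ℝ), f T s ≤ ((1/T) * exp (1/(64*T))) * K := by
  rw [K, ← integral_const_mul]
  apply setIntegral_mono_on (integrable_f_Ioi hT)
    (((integrableOn_Ioi_rpow_of_lt (by norm_num : (-4:ℝ) < -1) (by norm_num : (0:ℝ) < 2)).const_mul _))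
    measurableSet_Ioi
  intro s hs
  exact f_le_tail hT hs

lemma integral_f_Ioi0 {T : ℝ} (hT : 0 < T) :
    ∫ s in Ioi (0:ℝ), f T s
      = (exp (4/(27*T)) * Phi T - 8/3) + ∫ s in Ioi (2:ℝ), f T s := by
  rw [← integral_f_Ioc hT]
  rw [← setIntegral_union (Ioc_disjoint_Ioi le_rfl) measurableSet_Ioi
    (integrable_f_Ioc hT) (integrable_f_Ioi hT),
    Ioc_union_Ioi_eq_Ioi (by norm_num : (0:ℝ) ≤ 2)]

noncomputable def F (T y : ℝ) : ℝ :=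
  (Ioc (-q/Real.sqrt T) ((2-q)/Real.sqrt T)).indicator
    (fun y => exp (-(v (Real.sqrt T * y + q) + 4/27)/T) * (Real.sqrt T * y + q)^2) y

lemma measurable_F (T : ℝ) : Measurable (F T) := by
  apply Measurable.indicator _ measurableSet_Ioc
  have hφ : Measurable (fun y : ℝ => Real.sqrt T * y + q) :=
    (measurable_id.const_mul _).add_const _
  exact (Real.measurable_exp.comp ((((measurable_v.comp hφ).add_const _).neg).div_const T)).mul
    (hφ.pow_const 2)

lemma F_eval {T y : ℝ} (hT : 0 < T) (h1 : 0 < Real.sqrt T * y + q) :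
    exp (-(v (Real.sqrt T * y + q) + 4/27)/T) * (Real.sqrt T * y + q)^2
      = exp (-(y^2 * g (Real.sqrt T * y + q))) * (Real.sqrt T * y + q)^2 := by
  congr 2
  rw [key h1.ne', show Real.sqrt T * y + q - q = Real.sqrt T * y from by ring,
    mul_pow, sq_sqrt hT.le]
  field_simp

lemma main_tendsto :
    Tendsto (fun T => Phi T / Real.sqrt T) (nhdsWithin (0:ℝ) (Ioi 0))
      (𝓝 (3/4 * Real.sqrt π)) := by
  have hqpos := q_pos
  have hc : (0:ℝ) < q^4/1152 := by positivity
  have hDCT : Tendsto (fun T => ∫ y, F T y) (nhdsWithin (0:ℝ) (Ioi 0))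
      (𝓝 (∫ y : ℝ, exp (-(4/q^2) * y^2) * q^2)) := by
    apply tendsto_integral_filter_of_dominated_convergence
      (fun y => 4 * exp (-(q^4/1152) * y^2))
    · filter_upwards with T
      exact (measurable_F T).aestronglyMeasurable
    · filter_upwards [self_mem_nhdsWithin] with T hT
      filter_upwards with y
      by_cases hy : y ∈ Ioc (-q/Real.sqrt T) ((2-q)/Real.sqrt T)
      · have hsT : 0 < Real.sqrt T := sqrt_pos.mpr hT
        have h1 : 0 < Real.sqrt T * y + q := by
          have := (div_lt_iff₀ hsT).mp hy.1
          nlinarith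
        have h2 : Real.sqrt T * y + q ≤ 2 := by
          have := (le_div_iff₀ hsT).mp hy.2
          nlinarith
        rw [F, indicator_of_mem hy, F_eval hT h1, Real.norm_eq_abs,
          abs_of_nonneg (by positivity)]
        set s := Real.sqrt T * y + q with hsdef
        have hgc : q^4/1152 ≤ g s := g_lower h1 h2
        have hexp : exp (-(y^2 * g s)) ≤ exp (-(q^4/1152) * y^2) := by
          apply exp_le_exp.mpr
          nlinarith [sq_nonneg y]
        have hs2 : s^2 ≤ 4 := by nlinarith
        calc exp (-(y^2 * g s)) * s^2 ≤ exp (-(q^4/1152)*y^2) * 4 :=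
              mul_le_mul hexp hs2 (sq_nonneg s) (exp_pos _).le
        _ = 4 * exp (-(q^4/1152)*y^2) := by ring
      · rw [F, indicator_of_notMem hy, norm_zero]
        positivity
    · exact (integrable_exp_neg_mul_sq hc).const_mul 4
    · filter_upwards with y
      have hsq : Tendsto (fun T : ℝ => Real.sqrt T) (nhdsWithin (0:ℝ) (Ioi 0)) (𝓝 0) := by
        have : Tendsto Real.sqrt (𝓝 0) (𝓝 0) := by
          simpa using (Real.continuous_sqrt.tendsto 0)
        exact this.comp (nhdsWithin_le_nhds)
      have hsy : Tendsto (fun T : ℝ => Real.sqrt T * y) (nhdsWithin (0:ℝ) (Ioi 0)) (𝓝 0) := by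
        simpa using hsq.mul_const y
      have hmem : ∀ᶠ T in nhdsWithin (0:ℝ) (Ioi 0),
          Real.sqrt T * y ∈ Ioo (-q) (2-q) :=
        hsy (Ioo_mem_nhds (by linarith [q_pos]) (by linarith [q_lt_two]))
      have hcont : ContinuousAt (fun u : ℝ => exp (-(y^2 * g (u*y+q))) * (u*y+q)^2) 0 := by
        have h1 : ContinuousAt (fun u : ℝ => u*y+q) 0 := by fun_prop
        have hgq : ContinuousAt g ((fun u : ℝ => u*y+q) 0) := by
          simpa using g_contAt
        have hgcomp : ContinuousAt (fun u : ℝ => g (u*y+q)) 0 :=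
          ContinuousAt.comp (g := g) (f := fun u : ℝ => u*y+q) (x := 0) hgq h1
        apply ContinuousAt.mul
        · apply Real.continuous_exp.continuousAt.comp
          exact ((continuousAt_const.mul hgcomp).neg)
        · exact h1.pow 2
      have hlim := hcont.tendsto.comp hsq
      have h0eq : exp (-(y^2 * g ((0:ℝ)*y+q))) * ((0:ℝ)*y+q)^2
          = exp (-(4/q^2) * y^2) * q^2 := by
        simp only [zero_mul, zero_add, g_at_q]
        rw [show -(y^2 * (4/q^2)) = -(4/q^2)*y^2 from by ring]
      rw [h0eq] at hlim
      apply Tendsto.congr' _ hlim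
      filter_upwards [self_mem_nhdsWithin, hmem] with T hT hTy
      have hsT : 0 < Real.sqrt T := sqrt_pos.mpr hT
      have h1 : 0 < Real.sqrt T * y + q := by
        have := hTy.1
        linarith
      have hy : y ∈ Ioc (-q/Real.sqrt T) ((2-q)/Real.sqrt T) := by
        constructor
        · rw [div_lt_iff₀ hsT]
          nlinarith [hTy.1]
        · rw [le_div_iff₀ hsT]
          nlinarith [hTy.2]
      show (fun u : ℝ => exp (-(y^2 * g (u*y+q))) * (u*y+q)^2) (Real.sqrt T) = F T y
      rw [F, indicator_of_mem hy]
      simp only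
      rw [F_eval hT h1]
  have hint : (∫ y : ℝ, exp (-(4/q^2) * y^2) * q^2) = 3/4 * Real.sqrt π := by
    rw [integral_mul_const, integral_gaussian]
    have h1 : π / (4/q^2) = (q/2)^2 * π := by field_simp; ring
    rw [h1, sqrt_mul (sq_nonneg _), sqrt_sq (by positivity : (0:ℝ) ≤ q/2)]
    linear_combination (Real.sqrt π/2) * q_cube
  rw [hint] at hDCT
  apply Tendsto.congr' _ hDCT
  filter_upwards [self_mem_nhdsWithin] with T hT
  have hsT : 0 < Real.sqrt T := sqrt_pos.mpr hT
  have hab : -q/Real.sqrt T ≤ (2-q)/Real.sqrt T :=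
    (div_le_div_iff_of_pos_right hsT).mpr (by linarith [q_pos, q_lt_two])
  show (∫ y, F T y) = Phi T / Real.sqrt T
  have h1 : (∫ y, F T y) = ∫ y in Ioc (-q/Real.sqrt T) ((2-q)/Real.sqrt T),
      exp (-(v (Real.sqrt T * y + q) + 4/27)/T) * (Real.sqrt T * y + q)^2 := by
    simp only [F]
    exact integral_indicator measurableSet_Ioc
  have h2 : (∫ y in (-q/Real.sqrt T)..((2-q)/Real.sqrt T),
        exp (-(v (Real.sqrt T * y + q) + 4/27)/T) * (Real.sqrt T * y + q)^2)
      = (Real.sqrt T)⁻¹ • ∫ x in (0:ℝ)..2, exp (-(v x + 4/27)/T) * x^2 := by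
    have := intervalIntegral.integral_comp_mul_add
      (a := -q/Real.sqrt T) (b := (2-q)/Real.sqrt T)
      (f := fun x => exp (-(v x + 4/27)/T) * x^2) hsT.ne' q
    rw [show Real.sqrt T * (-q/Real.sqrt T) + q = 0 from by field_simp; ring,
      show Real.sqrt T * ((2-q)/Real.sqrt T) + q = 2 from by field_simp; ring] at this
    exact this
  rw [h1, ← intervalIntegral.integral_of_le hab, h2,
    intervalIntegral.integral_of_le (by norm_num : (0:ℝ) ≤ 2), smul_eq_mul]
  have : Phi T = ∫ x in Ioc (0:ℝ) 2, exp (-(v x + 4/27)/T) * x^2 := rfl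
  rw [← this]
  field_simp

noncomputable def Err (T : ℝ) : ℝ :=
  ((∫ s in Ioi (2:ℝ), f T s) - 8/3)/(Real.sqrt T * exp (4/(27*T)))

lemma err_lower {T : ℝ} (hT : 0 < T) : -486*(T*Real.sqrt T) ≤ Err T := by
  have hE : 0 < Real.sqrt T * exp (4/(27*T)) := by positivity
  have he : 4/(729*T^2) ≤ exp (4/(27*T)) := by
    have h1 := exp_ge_quarter_sq (z := 4/(27*T)) (by positivity)
    calc 4/(729*T^2) = (4/(27*T))^2/4 := by field_simp; ring
    _ ≤ exp (4/(27*T)) := h1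
  have hTe : (4:ℝ)/729 ≤ T^2 * exp (4/(27*T)) := by
    have h2 := mul_le_mul_of_nonneg_left he (sq_nonneg T)
    have h3 : T^2 * (4/(729*T^2)) = 4/729 := by field_simp
    linarith [h3 ▸ h2]
  rw [Err, le_div_iff₀ hE]
  have hprod : -486*(T*Real.sqrt T)*(Real.sqrt T * exp (4/(27*T)))
      = -486*(T^2 * exp (4/(27*T))) := by
    rw [show -486*(T*Real.sqrt T)*(Real.sqrt T * exp (4/(27*T)))
        = -486*((Real.sqrt T*Real.sqrt T) * (T * exp (4/(27*T)))) from by ring,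
      mul_self_sqrt hT.le]
    ring
  rw [hprod]
  linarith [tail_nonneg hT, hTe]

lemma err_upper {T : ℝ} (hT : 0 < T) :
    Err T ≤ (4*K/(229/1728)^2) * Real.sqrt T := by
  have hE : 0 < Real.sqrt T * exp (4/(27*T)) := by positivity
  have hEeq : exp (4/(27*T)) = exp (1/(64*T)) * exp ((229/1728)/T) := by
    rw [← Real.exp_add]
    congr 1
    field_simp
    ring
  have hTe2 : ((229:ℝ)/1728)^2/4 ≤ T^2 * exp ((229/1728)/T) := by
    have h1 := exp_ge_quarter_sq (z := (229/1728)/T) (by positivity)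
    have h2 := mul_le_mul_of_nonneg_left h1 (sq_nonneg T)
    have h3 : T^2 * (((229/1728)/T)^2/4) = ((229:ℝ)/1728)^2/4 := by field_simp
    linarith [h3 ▸ h2]
  have h1 : Err T ≤ ((1/T) * exp (1/(64*T)) * K)/(Real.sqrt T * exp (4/(27*T))) := by
    apply (div_le_div_iff_of_pos_right hE).mpr
    linarith [tail_le hT]
  refine h1.trans ?_
  have hss := mul_self_sqrt hT.le
  have huT : (0:ℝ) < Real.sqrt T := sqrt_pos.mpr hT
  calc ((1/T) * exp (1/(64*T)) * K)/(Real.sqrt T * exp (4/(27*T)))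
      = K/(T * Real.sqrt T * exp ((229/1728)/T)) := by
        rw [hEeq]
        rw [div_eq_div_iff (by positivity) (by positivity)]
        field_simp
  _ ≤ (4*K/(229/1728)^2) * Real.sqrt T := by
      rw [div_le_iff₀ (by positivity)]
      have hmul2 := mul_le_mul_of_nonneg_left hTe2 K_nonneg
      have hrw : (4*K/((229:ℝ)/1728)^2) * Real.sqrt T * (T * Real.sqrt T * exp ((229/1728)/T))
          = (4*K/((229:ℝ)/1728)^2) * (T^2*exp ((229/1728)/T)) := by
        rw [show (4*K/((229:ℝ)/1728)^2) * Real.sqrt T * (T * Real.sqrt T * exp ((229/1728)/T))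
            = (4*K/((229:ℝ)/1728)^2) * ((Real.sqrt T * Real.sqrt T) * (T * exp ((229/1728)/T)))
          from by ring, hss]
        ring
      rw [hrw, show 4*K/((229:ℝ)/1728)^2 * (T^2*exp ((229/1728)/T))
          = (4/((229:ℝ)/1728)^2) * (K*(T^2*exp ((229/1728)/T))) from by ring]
      calc K = (4/((229:ℝ)/1728)^2) * (K*((229/1728)^2/4)) := by ring
      _ ≤ (4/((229:ℝ)/1728)^2) * (K*(T^2*exp ((229/1728)/T))) :=
        mul_le_mul_of_nonneg_left hmul2 (by positivity)

lemma err_tendsto : Tendsto Err (nhdsWithin (0:ℝ) (Ioi 0)) (𝓝 0) := by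
  apply tendsto_of_tendsto_of_tendsto_of_le_of_le'
    (g := fun T : ℝ => -486*(T*Real.sqrt T)) (h := fun T : ℝ => (4*K/(229/1728)^2) * Real.sqrt T)
  · have : Continuous (fun T : ℝ => -486*(T*Real.sqrt T)) :=
      continuous_const.mul (continuous_id.mul continuous_sqrt)
    have h0 := this.tendsto 0
    simp only [id_eq, sqrt_zero, mul_zero, zero_mul] at h0
    exact h0.mono_left nhdsWithin_le_nhds
  · have : Continuous (fun T : ℝ => (4*K/(229/1728)^2) * Real.sqrt T) :=
      continuous_const.mul continuous_sqrt
    have h0 := this.tendsto 0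
    simp only [sqrt_zero, mul_zero] at h0
    exact h0.mono_left nhdsWithin_le_nhds
  · filter_upwards [self_mem_nhdsWithin] with T hT
    exact err_lower hT
  · filter_upwards [self_mem_nhdsWithin] with T hT
    exact err_upper hT

end MieAux


open MieAux in
/-- Low-temperature asymptotics for the Mie potential with `n = 9`, `m = 6`:
`B(T) ∼ -(3π^{3/2}/2) σ³ √T e^{4/(27T)}` as `T → 0⁺`. -/
theorem second_virial_low_temperature_9_6 (σ : ℝ) (hσ : 0 < σ)
    (B : ℝ → ℝ)
    (hB : ∀ T : ℝ, B T = -2 * π * ∫ r in Set.Ioi (0 : ℝ),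
        (Real.exp (-(1 / T) * ((σ / r) ^ (9 : ℝ) - (σ / r) ^ (6 : ℝ))) - 1) * r ^ 2) :
    Tendsto (fun T : ℝ => B T /
        (-(3 * π ^ ((3 : ℝ) / 2) / 2) * σ ^ 3 * Real.sqrt T * Real.exp (4 / (27 * T))))
      (nhdsWithin 0 (Set.Ioi 0)) (nhds 1) := by
  have hπ : 0 < π := pi_pos
  have hsπ : 0 < Real.sqrt π := sqrt_pos.mpr hπ
  have hmodel : Tendsto (fun T : ℝ => (4/(3*Real.sqrt π)) * (Phi T / Real.sqrt T)
      + (4/(3*Real.sqrt π)) * Err T) (nhdsWithin 0 (Set.Ioi 0)) (nhds 1) := by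
    have h := (main_tendsto.const_mul (4/(3*Real.sqrt π))).add
      (err_tendsto.const_mul (4/(3*Real.sqrt π)))
    have heq : (4/(3*Real.sqrt π)) * (3/4*Real.sqrt π) + (4/(3*Real.sqrt π)) * 0 = 1 := by
      field_simp
      ring
    rwa [heq] at h
  apply Tendsto.congr' _ hmodel
  filter_upwards [self_mem_nhdsWithin] with T hT
  have hT : 0 < T := hT
  have hsub : (∫ r in Set.Ioi (0:ℝ),
      (Real.exp (-(1 / T) * ((σ / r) ^ (9 : ℝ) - (σ / r) ^ (6 : ℝ))) - 1) * r ^ 2)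
      = σ^3 * ∫ s in Set.Ioi (0:ℝ), f T s := by
    have h1 := integral_comp_mul_left_Ioi
      (g := fun r => (Real.exp (-(1 / T) * ((σ / r) ^ (9 : ℝ) - (σ / r) ^ (6 : ℝ))) - 1) * r ^ 2)
      0 hσ
    rw [mul_zero] at h1
    have h2 : ∀ s : ℝ,
        (Real.exp (-(1 / T) * ((σ / (σ*s)) ^ (9 : ℝ) - (σ / (σ*s)) ^ (6 : ℝ))) - 1) * (σ*s) ^ 2
        = σ^2 * f T s := by
      intro s
      have hdiv : σ/(σ*s) = s⁻¹ := by
        rcases eq_or_ne s 0 with h|h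
        · simp [h]
        · field_simp
      rw [hdiv, f, v]
      have h9 : (s⁻¹) ^ (9:ℝ) = (s⁻¹)^(9:ℕ) := by
        rw [← Real.rpow_natCast (s⁻¹) 9]; norm_num
      have h6 : (s⁻¹) ^ (6:ℝ) = (s⁻¹)^(6:ℕ) := by
        rw [← Real.rpow_natCast (s⁻¹) 6]; norm_num
      rw [h9, h6]; ring
    simp_rw [h2, smul_eq_mul, integral_const_mul] at h1
    have h4 : σ * (σ^2 * ∫ s in Set.Ioi (0:ℝ), f T s)
        = σ * (σ⁻¹ * ∫ r in Set.Ioi (0:ℝ),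
          (Real.exp (-(1 / T) * ((σ / r) ^ (9 : ℝ) - (σ / r) ^ (6 : ℝ))) - 1) * r ^ 2) := by
      rw [h1]
    rw [← mul_assoc, ← mul_assoc, mul_inv_cancel₀ hσ.ne', one_mul] at h4
    rw [← h4]; ring
  rw [hB T, hsub, integral_f_Ioi0 hT]
  have hsT : 0 < Real.sqrt T := sqrt_pos.mpr hT
  have hexp : 0 < Real.exp (4/(27*T)) := exp_pos _
  have hpi32 : π ^ ((3:ℝ)/2) = π * Real.sqrt π := by
    rw [show (3:ℝ)/2 = 1 + 1/2 by norm_num, rpow_add hπ, rpow_one, ← sqrt_eq_rpow]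
  rw [Err, hpi32]
  field_simp
  ring
end
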